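/- arXiv:0804.3649 — 5 statements merged into one kernel-verified Lean document; each statement's English description precedes it below -/
import Mathlib

section
/- Let 0 < c₁ ≤ c₂ and δ > 0 be real numbers. Then there exists a constant B > 0 such that for every z ∈ ℂ with 0 < |z| ≤ δ and every measurable function r : [−δ, δ] → ℝ satisfying √(c₁|z|² + t²) ≤ r(t) ≤ √(c₂|z|² + t²) for all t ∈ [−δ, δ], one has |∫_{−δ}^{δ} (1/r(t)) dt + ln(|z|²)| ≤ B. -/
/-!
Since `d/dt arsinh (t / √q) = 1 / √(q + t²)`, the comparison integrals are explicit: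
`∫_{-δ}^{δ} dt / √(q + t²) = 2 arsinh (δ / √q) = 2 log (δ + √(q + δ²)) - log q`.
For `q = c|z|²` the `-log q` cancels `ln |z|²` up to the constant `log c`, while
`log (δ + √(q + δ²))` stays between `log (2δ)` and `log (δ + √(c₂δ² + δ²))` for `0 ≤ q ≤ c₂δ²`.
Monotonicity of the integral in the pinching then bounds `∫ dt / r`.
-/

open Real MeasureTheory Set

theorem continuous_one_div_sqrt_add_sq {q : ℝ} (hq : 0 < q) :
    Continuous fun t : ℝ => 1 / √(q + t ^ 2) :=
  continuous_const.div (by fun_prop) fun t => by positivity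

theorem hasDerivAt_arsinh_div_sqrt {q : ℝ} (hq : 0 < q) (t : ℝ) :
    HasDerivAt (fun u => arsinh (u / √q)) (1 / √(q + t ^ 2)) t := by
  convert ((hasDerivAt_id' t).div_const √q).arsinh using 1
  have : √(q + t ^ 2) = √q * √(1 + (t / √q) ^ 2) := by
    rw [← sqrt_mul hq.le, mul_add, mul_one, div_pow, sq_sqrt hq.le, mul_div_cancel₀ _ hq.ne']
  rw [this, smul_eq_mul]
  field_simp

theorem integral_one_div_sqrt_add_sq {q : ℝ} (hq : 0 < q) (a b : ℝ) :
    ∫ t in a..b, 1 / √(q + t ^ 2) = arsinh (b / √q) - arsinh (a / √q) :=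
  intervalIntegral.integral_eq_sub_of_hasDerivAt (fun t _ => hasDerivAt_arsinh_div_sqrt hq t)
    ((continuous_one_div_sqrt_add_sq hq).intervalIntegrable _ _)

theorem two_mul_arsinh_div_sqrt {q : ℝ} (hq : 0 < q) (δ : ℝ) :
    2 * arsinh (δ / √q) = 2 * log (δ + √(q + δ ^ 2)) - log q := by
  have hsq : 0 < √q := sqrt_pos.mpr hq
  have hpos : 0 < δ + √(q + δ ^ 2) := by
    have := sqrt_lt_sqrt (sq_nonneg δ) (show δ ^ 2 < q + δ ^ 2 by linarith)
    rw [sqrt_sq_eq_abs] at this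
    linarith [neg_abs_le δ]
  have : δ / √q + √(1 + (δ / √q) ^ 2) = (δ + √(q + δ ^ 2)) / √q := by
    rw [add_div, ← sqrt_div' _ hq.le, div_pow, sq_sqrt hq.le, one_add_div hq.ne']
  rw [arsinh, this, log_div hpos.ne' hsq.ne', log_sqrt hq.le]
  ring

theorem integral_neg_one_div_sqrt_add_sq {q : ℝ} (hq : 0 < q) (δ : ℝ) :
    ∫ t in (-δ)..δ, 1 / √(q + t ^ 2) = 2 * log (δ + √(q + δ ^ 2)) - log q := by
  rw [integral_one_div_sqrt_add_sq hq, neg_div, arsinh_neg, ← two_mul_arsinh_div_sqrt hq]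
  ring

theorem log_add_sqrt_add_sq_le_of_le {q q' δ : ℝ} (hδ : 0 < δ) (hq : 0 ≤ q) (hqq' : q ≤ q') :
    log (δ + √(q + δ ^ 2)) ≤ log (δ + √(q' + δ ^ 2)) :=
  log_le_log (by positivity) (by gcongr)

theorem integral_one_div_sqrt_le_integral_one_div_le {p q a b : ℝ} (hp : 0 < p) (hq : 0 < q)
    (hab : a ≤ b) {r : ℝ → ℝ} (hr : AEMeasurable r (volume.restrict (Icc a b)))
    (hpinch : ∀ t ∈ Icc a b, √(p + t ^ 2) ≤ r t ∧ r t ≤ √(q + t ^ 2)) :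
    ∫ t in a..b, 1 / √(q + t ^ 2) ≤ ∫ t in a..b, 1 / r t ∧
      ∫ t in a..b, 1 / r t ≤ ∫ t in a..b, 1 / √(p + t ^ 2) := by
  have hlo (t : ℝ) (ht : t ∈ Icc a b) : 1 / √(q + t ^ 2) ≤ 1 / r t :=
    one_div_le_one_div_of_le ((sqrt_pos.mpr (by positivity)).trans_le (hpinch t ht).1)
      (hpinch t ht).2
  have hhi (t : ℝ) (ht : t ∈ Icc a b) : 1 / r t ≤ 1 / √(p + t ^ 2) :=
    one_div_le_one_div_of_le (sqrt_pos.mpr (by positivity)) (hpinch t ht).1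
  have hint : IntervalIntegrable (fun t => 1 / r t) volume a b := by
    rw [intervalIntegrable_iff_integrableOn_Icc_of_le hab]
    exact integrable_of_le_of_le
      (hr.inv.aestronglyMeasurable.congr (ae_of_all _ fun t => (one_div (r t)).symm))
      (ae_restrict_of_forall_mem measurableSet_Icc hlo)
      (ae_restrict_of_forall_mem measurableSet_Icc hhi)
      (continuous_one_div_sqrt_add_sq hq).integrableOn_Icc
      (continuous_one_div_sqrt_add_sq hp).integrableOn_Icc
  exact ⟨intervalIntegral.integral_mono_on hab
      ((continuous_one_div_sqrt_add_sq hq).intervalIntegrable _ _) hint hlo,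
    intervalIntegral.integral_mono_on hab hint
      ((continuous_one_div_sqrt_add_sq hp).intervalIntegrable _ _) hhi⟩

/-- Integral lemma: for `0 < c₁ ≤ c₂` and `δ > 0` there is a bound `B > 0` such that for
every `z ∈ ℂ` with `0 < |z| ≤ δ` and every function `r` measurable on `[-δ, δ]` pinched
between `√(c₁|z|² + t²)` and `√(c₂|z|² + t²)`, one has
`|∫_{-δ}^{δ} dt / r(t) + ln |z|²| ≤ B`. -/
theorem stmt0 (c₁ c₂ δ : ℝ) (hc₁ : 0 < c₁) (hc : c₁ ≤ c₂) (hδ : 0 < δ) :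
    ∃ B > (0 : ℝ), ∀ z : ℂ, 0 < ‖z‖ → ‖z‖ ≤ δ →
      ∀ r : ℝ → ℝ,
        AEMeasurable r (MeasureTheory.volume.restrict (Set.Icc (-δ) δ)) →
        (∀ t ∈ Set.Icc (-δ) δ,
          Real.sqrt (c₁ * ‖z‖ ^ 2 + t ^ 2) ≤ r t ∧
          r t ≤ Real.sqrt (c₂ * ‖z‖ ^ 2 + t ^ 2)) →
        |(∫ t in (-δ)..δ, 1 / r t) + Real.log (‖z‖ ^ 2)| ≤ B := by
  have hc₂ : 0 < c₂ := hc₁.trans_le hc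
  refine ⟨|2 * log (2 * δ) - log c₂| + |2 * log (δ + √(c₂ * δ ^ 2 + δ ^ 2)) - log c₁| + 1,
    by positivity, fun z hz hzδ r hr hpinch => ?_⟩
  have hcomparison (c : ℝ) (hc : 0 < c) :
      (∫ t in (-δ)..δ, 1 / √(c * ‖z‖ ^ 2 + t ^ 2)) + log (‖z‖ ^ 2)
        = 2 * log (δ + √(c * ‖z‖ ^ 2 + δ ^ 2)) - log c := by
    rw [integral_neg_one_div_sqrt_add_sq (by positivity), log_mul hc.ne' (by positivity)]
    ring
  obtain ⟨hlo, hhi⟩ := integral_one_div_sqrt_le_integral_one_div_le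
    (by positivity : 0 < c₁ * ‖z‖ ^ 2) (by positivity : 0 < c₂ * ‖z‖ ^ 2) (by linarith) hr hpinch
  have hlog_lo := log_add_sqrt_add_sq_le_of_le hδ le_rfl (by positivity : 0 ≤ c₂ * ‖z‖ ^ 2)
  rw [zero_add, sqrt_sq hδ.le, ← two_mul] at hlog_lo
  have hlog_hi := log_add_sqrt_add_sq_le_of_le hδ (by positivity)
    (show c₁ * ‖z‖ ^ 2 ≤ c₂ * δ ^ 2 by gcongr)
  rw [abs_le]
  constructor <;> linarith [hcomparison c₁ hc₁, hcomparison c₂ hc₂,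
    le_abs_self (2 * log (2 * δ) - log c₂), neg_abs_le (2 * log (2 * δ) - log c₂),
    abs_nonneg (2 * log (δ + √(c₂ * δ ^ 2 + δ ^ 2)) - log c₁),
    le_abs_self (2 * log (δ + √(c₂ * δ ^ 2 + δ ^ 2)) - log c₁)]
end

section
/- Let t₀ > 0 and c > 0, and let A, Φ : [0, t₀) → M_n(ℂ) be continuous with A(t)† = −A(t), Φ(t)† = −Φ(t), and operator norm ‖Φ(t)‖ ≤ c/(t₀ − t) for all t ∈ [0, t₀). If g : [0, t₀) → M_n(ℂ) is differentiable and satisfies g′(t) = (−A(t) + iΦ(t)) g(t), then for all t ∈ [0, t₀), ‖g(t)‖_F ≤ ‖g(0)‖_F · (t₀/(t₀ − t))^c. -/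
/-!
Along each column `v` of `g` we have `v' = (-A + iΦ) v`. Since `A` is skew-Hermitian it does not
change `‖v‖²`, and `iΦ` increases it at rate at most `2‖Φ‖ ‖v‖² ≤ 2c/(t₀ - t) ‖v‖²`. This
singular Gronwall inequality is integrated by the factor `(t₀ - t)^{2c}`:
`‖v t‖² (t₀ - t)^{2c}` is antitone. Summing over the columns gives the Frobenius bound.
-/

open Matrix

attribute [local instance] Matrix.normedAddCommGroup Matrix.normedSpace

/-- The Frobenius norm `‖X‖_F = √(tr (X Xᴴ))` of a complex matrix. -/
noncomputable def frobeniusNorm' {n : ℕ} (X : Matrix (Fin n) (Fin n) ℂ) : ℝ :=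
  Real.sqrt (Matrix.trace (X * Xᴴ)).re

/-- The operator norm of a complex matrix acting on Euclidean space `ℂⁿ`. -/
noncomputable def opNorm' {n : ℕ} (X : Matrix (Fin n) (Fin n) ℂ) : ℝ :=
  ‖Matrix.toEuclideanCLM (𝕜 := ℂ) X‖

open Set RCLike

section SingularGronwall

variable {N N' : ℝ → ℝ} {t₁ t₀ a : ℝ}

theorem antitoneOn_mul_rpow_sub_of_hasDerivWithinAt_le
    (hN : ∀ u ∈ Ico t₁ t₀, HasDerivWithinAt N (N' u) (Ico t₁ t₀) u)
    (hN' : ∀ u ∈ Ico t₁ t₀, N' u ≤ a / (t₀ - u) * N u) :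
    AntitoneOn (fun u ↦ N u * (t₀ - u) ^ a) (Ico t₁ t₀) := by
  refine antitoneOn_of_hasDerivWithinAt_nonpos (convex_Ico t₁ t₀)
    (f' := fun u ↦ N' u * (t₀ - u) ^ a + N u * (-1 * a * (t₀ - u) ^ (a - 1))) ?_ ?_ ?_
  · refine ContinuousOn.mul (fun u hu ↦ (hN u hu).continuousWithinAt) ?_
    exact (continuousOn_const.sub continuousOn_id).rpow_const
      fun u hu ↦ Or.inl (sub_pos.2 hu.2).ne'
  · rw [interior_Ico]
    intro u hu
    have hNu : HasDerivAt N (N' u) u := (hN u (Ioo_subset_Ico_self hu)).hasDerivAt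
      (Ico_mem_nhds hu.1 hu.2)
    have hpow := ((hasDerivAt_id u).const_sub t₀).rpow_const (p := a)
      (Or.inl (sub_pos.2 hu.2).ne')
    exact (hNu.mul hpow).hasDerivWithinAt
  · rw [interior_Ico]
    intro u hu
    have hpos : 0 < t₀ - u := sub_pos.2 hu.2
    rw [Real.rpow_sub_one hpos.ne']
    calc N' u * (t₀ - u) ^ a + N u * (-1 * a * ((t₀ - u) ^ a / (t₀ - u)))
        = (N' u - a / (t₀ - u) * N u) * (t₀ - u) ^ a := by ring
      _ ≤ 0 := mul_nonpos_of_nonpos_of_nonneg (sub_nonpos.2 (hN' u (Ioo_subset_Ico_self hu)))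
          (Real.rpow_nonneg hpos.le a)

theorem le_mul_div_rpow_of_hasDerivWithinAt_le
    (hN : ∀ u ∈ Ico t₁ t₀, HasDerivWithinAt N (N' u) (Ico t₁ t₀) u)
    (hN' : ∀ u ∈ Ico t₁ t₀, N' u ≤ a / (t₀ - u) * N u) {t : ℝ} (ht : t ∈ Ico t₁ t₀) :
    N t ≤ N t₁ * ((t₀ - t₁) / (t₀ - t)) ^ a := by
  have hpos : 0 < t₀ - t := sub_pos.2 ht.2
  have hmono := antitoneOn_mul_rpow_sub_of_hasDerivWithinAt_le hN hN'
    (left_mem_Ico.2 (ht.1.trans_lt ht.2)) ht ht.1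
  rw [Real.div_rpow (by linarith [ht.1]) hpos.le, ← mul_div_assoc,
    le_div_iff₀ (Real.rpow_pos_of_pos hpos a)]
  exact hmono

end SingularGronwall

section SkewAdjointPerturbation

variable {E : Type*} [NormedAddCommGroup E] [InnerProductSpace ℂ E] [CompleteSpace E]

theorem re_inner_apply_self_eq_zero_of_mem_skewAdjoint {S : E →L[ℂ] E}
    (hS : S ∈ skewAdjoint (E →L[ℂ] E)) (x : E) : re (inner ℂ x (S x)) = 0 := by
  have hadj : ContinuousLinearMap.adjoint S = -S := by
    rw [← ContinuousLinearMap.star_eq_adjoint, skewAdjoint.mem_iff.1 hS]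
  have h := S.adjoint_inner_left x x
  rw [hadj, _root_.neg_apply, inner_neg_left, ← inner_conj_symm] at h
  have := congrArg re h
  rw [map_neg, conj_re] at this
  linarith

theorem re_inner_add_apply_self_le {S T : E →L[ℂ] E} (hS : S ∈ skewAdjoint (E →L[ℂ] E))
    (x : E) : re (inner ℂ x ((S + T) x)) ≤ ‖T‖ * ‖x‖ ^ 2 := by
  rw [_root_.add_apply, inner_add_right, map_add,
    re_inner_apply_self_eq_zero_of_mem_skewAdjoint hS, zero_add]
  calc re (inner ℂ x (T x)) ≤ ‖x‖ * ‖T x‖ := re_inner_le_norm _ _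
    _ ≤ ‖x‖ * (‖T‖ * ‖x‖) := by gcongr; exact T.le_opNorm x
    _ = ‖T‖ * ‖x‖ ^ 2 := by ring

theorem norm_le_mul_div_rpow_of_hasDerivWithinAt_skewAdjoint_add {v : ℝ → E}
    {S T : ℝ → E →L[ℂ] E} {t₁ t₀ c : ℝ} (hS : ∀ u ∈ Ico t₁ t₀, S u ∈ skewAdjoint (E →L[ℂ] E))
    (hT : ∀ u ∈ Ico t₁ t₀, ‖T u‖ ≤ c / (t₀ - u))
    (hv : ∀ u ∈ Ico t₁ t₀, HasDerivWithinAt v ((S u + T u) (v u)) (Ico t₁ t₀) u)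
    {t : ℝ} (ht : t ∈ Ico t₁ t₀) :
    ‖v t‖ ≤ ‖v t₁‖ * ((t₀ - t₁) / (t₀ - t)) ^ c := by
  let : InnerProductSpace ℝ E := InnerProductSpace.rclikeToReal ℂ E
  have hsq : ‖v t‖ ^ 2 ≤ ‖v t₁‖ ^ 2 * ((t₀ - t₁) / (t₀ - t)) ^ (2 * c) := by
    have := le_mul_div_rpow_of_hasDerivWithinAt_le (N := (‖v ·‖ ^ 2)) (a := 2 * c)
      (fun u hu ↦ (hv u hu).norm_sq) ?_ ht
    · simpa using this
    intro u hu
    calc 2 * inner ℝ (v u) ((S u + T u) (v u)) ≤ 2 * (‖T u‖ * ‖v u‖ ^ 2) := by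
          rw [real_inner_eq_re_inner ℂ]
          gcongr; exact re_inner_add_apply_self_le (hS u hu) (v u)
      _ ≤ 2 * (c / (t₀ - u) * ‖v u‖ ^ 2) := by gcongr; exact hT u hu
      _ = 2 * c / (t₀ - u) * ‖v u‖ ^ 2 := by ring
  have hbase : 0 ≤ (t₀ - t₁) / (t₀ - t) :=
    div_nonneg (sub_nonneg.2 (ht.1.trans ht.2.le)) (sub_pos.2 ht.2).le
  rw [mul_comm 2 c, Real.rpow_mul hbase, Real.rpow_two, ← mul_pow] at hsq
  exact (pow_le_pow_iff_left₀ (norm_nonneg _)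
    (mul_nonneg (norm_nonneg _) (Real.rpow_nonneg hbase c)) two_ne_zero).1 hsq

end SkewAdjointPerturbation

theorem HasDerivWithinAt.toLp_transpose_apply {m n : Type*} [Fintype m] [Fintype n]
    {g : ℝ → Matrix m n ℂ} {g' : Matrix m n ℂ} {s : Set ℝ} {u : ℝ}
    (h : HasDerivWithinAt g g' s u) (j : n) :
    HasDerivWithinAt (fun u ↦ WithLp.toLp 2 ((g u)ᵀ j)) (WithLp.toLp 2 (g'ᵀ j)) s u := by
  have hcol : HasDerivWithinAt (fun u ↦ (g u)ᵀ j) (g'ᵀ j) s u :=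
    hasDerivWithinAt_pi.2 fun i ↦ hasDerivWithinAt_pi.1 (hasDerivWithinAt_pi.1 h i) j
  exact (PiLp.continuousLinearEquiv 2 ℝ (fun _ : m ↦ ℂ)).symm.hasFDerivAt.comp_hasDerivWithinAt
    u hcol

theorem frobeniusNorm'_eq_sqrt_sum_norm_sq {n : ℕ} (X : Matrix (Fin n) (Fin n) ℂ) :
    frobeniusNorm' X = √(∑ j, ‖WithLp.toLp 2 (Xᵀ j)‖ ^ 2) := by
  simp only [frobeniusNorm', trace, diag, mul_apply, conjTranspose_apply, Complex.re_sum,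
    EuclideanSpace.norm_sq_eq, transpose_apply]
  rw [Finset.sum_comm]
  simp only [star_def, Complex.mul_conj, Complex.normSq_eq_norm_sq, Complex.ofReal_re]

theorem stmt4_general (n : ℕ) (t₀ c : ℝ)
    (A Φ g : ℝ → Matrix (Fin n) (Fin n) ℂ)
    (hAskew : ∀ t ∈ Set.Ico (0 : ℝ) t₀, (A t)ᴴ = -A t)
    (hΦbound : ∀ t ∈ Set.Ico (0 : ℝ) t₀, opNorm' (Φ t) ≤ c / (t₀ - t))
    (hg : ∀ t ∈ Set.Ico (0 : ℝ) t₀,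
      HasDerivWithinAt g ((-A t + Complex.I • Φ t) * g t) (Set.Ico 0 t₀) t) :
    ∀ t ∈ Set.Ico (0 : ℝ) t₀,
      frobeniusNorm' (g t) ≤ frobeniusNorm' (g 0) * (t₀ / (t₀ - t)) ^ c := by
  intro t ht
  have hcol (j : Fin n) : ‖WithLp.toLp 2 ((g t)ᵀ j)‖ ≤
      ‖WithLp.toLp 2 ((g 0)ᵀ j)‖ * (t₀ / (t₀ - t)) ^ c := by
    nth_rw 1 [← sub_zero t₀]
    refine norm_le_mul_div_rpow_of_hasDerivWithinAt_skewAdjoint_add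
      (v := fun u ↦ WithLp.toLp 2 ((g u)ᵀ j)) (S := fun u ↦ toEuclideanCLM (𝕜 := ℂ) (-A u))
      (T := fun u ↦ toEuclideanCLM (𝕜 := ℂ) (Complex.I • Φ u))
      (fun u hu ↦ ?_) (fun u hu ↦ ?_) (fun u hu ↦ ?_) ht
    · rw [skewAdjoint.mem_iff, ← map_star, ← map_neg, star_eq_conjTranspose,
        conjTranspose_neg, hAskew u hu]
    · rw [map_smul, norm_smul, Complex.norm_I, one_mul]
      exact hΦbound u hu
    · have := (hg u hu).toLp_transpose_apply j
      -- `(M * X)ᵀ j` is definitionally `M *ᵥ Xᵀ j`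
      rwa [← map_add, toEuclideanCLM_toLp]
  have hr : 0 ≤ (t₀ / (t₀ - t)) ^ c :=
    Real.rpow_nonneg (div_nonneg (ht.1.trans ht.2.le) (sub_pos.2 ht.2).le) c
  rw [frobeniusNorm'_eq_sqrt_sum_norm_sq, frobeniusNorm'_eq_sqrt_sum_norm_sq,
    ← Real.sqrt_sq hr, ← Real.sqrt_mul (Finset.sum_nonneg fun _ _ ↦ sq_nonneg _), Finset.sum_mul]
  gcongr with j
  rw [← mul_pow]
  exact pow_le_pow_left₀ (norm_nonneg _) (hcol j) 2

/-- Algebraic growth of solutions of the scattering equation near the singularity: if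
`A, Φ : [0, t₀) → Mₙ(ℂ)` are continuous with skew-Hermitian values, `‖Φ(t)‖ ≤ c/(t₀ - t)`,
and `g' = (-A + iΦ) g`, then `‖g(t)‖_F ≤ ‖g(0)‖_F · (t₀/(t₀ - t))^c`. -/
theorem stmt4 (n : ℕ) (t₀ c : ℝ) (ht₀ : 0 < t₀) (hc : 0 < c)
    (A Φ g : ℝ → Matrix (Fin n) (Fin n) ℂ)
    (hA : ContinuousOn A (Set.Ico 0 t₀)) (hΦ : ContinuousOn Φ (Set.Ico 0 t₀))
    (hAskew : ∀ t ∈ Set.Ico (0 : ℝ) t₀, (A t)ᴴ = -A t)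
    (hΦskew : ∀ t ∈ Set.Ico (0 : ℝ) t₀, (Φ t)ᴴ = -Φ t)
    (hΦbound : ∀ t ∈ Set.Ico (0 : ℝ) t₀, opNorm' (Φ t) ≤ c / (t₀ - t))
    (hg : ∀ t ∈ Set.Ico (0 : ℝ) t₀,
      HasDerivWithinAt g ((-A t + Complex.I • Φ t) * g t) (Set.Ico 0 t₀) t) :
    ∀ t ∈ Set.Ico (0 : ℝ) t₀,
      frobeniusNorm' (g t) ≤ frobeniusNorm' (g 0) * (t₀ / (t₀ - t)) ^ c :=
  stmt4_general n t₀ c A Φ g hAskew hΦbound hg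
end

section
/- Let U ⊆ ℝ³ be open with coordinates (x,y,t) and z = x+iy, let ρ : U → ℝ be smooth, and let A_z, A_t, Φ, η, a_z, a_t, φ : U → M_n(ℂ) be smooth with A_{z̄} := −A_z†, a_{z̄} := −a_z†, A_t† = −A_t, Φ† = −Φ, a_t† = −a_t, φ† = −φ. Define D_z X = ∂_z X + [A_z, X], D_{z̄} X = ∂_{z̄} X + [A_{z̄}, X], D_t X = ∂_t X + [A_t, X]. Assume: (B) ∂_{z̄} A_z − ∂_z A_{z̄} + [A_{z̄}, A_z] = −2iρ(∂_t Φ + [A_t, Φ]); (L1) D_t η − [iΦ, η] = −(a_t − iφ); (L2) D_{z̄} η = −a_{z̄}; (L3) D_{z̄} a_z − D_z a_{z̄} = ρ( (D_t(a_t − iφ) + [iΦ, a_t − iφ]) − (D_t(a_t + iφ) − [iΦ, a_t + iφ]) ). Then, setting M := η + η†, one has D_{z̄}(D_z M) + ρ( D_t( D_t M + [iΦ, M] ) − [iΦ, D_t M + [iΦ, M]] ) = 0 on U. -/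
open Matrix

attribute [local instance] Matrix.normedAddCommGroup Matrix.normedSpace

/-- Partial derivative in the first (`x`) coordinate, taken entrywise. -/
noncomputable def pdx {E : Type*} [NormedAddCommGroup E] [NormedSpace ℝ E]
    (F : ℝ × ℝ × ℝ → E) (p : ℝ × ℝ × ℝ) : E :=
  deriv (fun s => F (s, p.2.1, p.2.2)) p.1

/-- Partial derivative in the second (`y`) coordinate, taken entrywise. -/
noncomputable def pdy {E : Type*} [NormedAddCommGroup E] [NormedSpace ℝ E]
    (F : ℝ × ℝ × ℝ → E) (p : ℝ × ℝ × ℝ) : E :=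
  deriv (fun s => F (p.1, s, p.2.2)) p.2.1

/-- Partial derivative in the third (`t`) coordinate, taken entrywise. -/
noncomputable def pdt {E : Type*} [NormedAddCommGroup E] [NormedSpace ℝ E]
    (F : ℝ × ℝ × ℝ → E) (p : ℝ × ℝ × ℝ) : E :=
  deriv (fun s => F (p.1, p.2.1, s)) p.2.2

/-- Wirtinger derivative `∂_z = ½(∂_x - i ∂_y)`, entrywise. -/
noncomputable def pdz {E : Type*} [NormedAddCommGroup E] [NormedSpace ℂ E]
    (F : ℝ × ℝ × ℝ → E) (p : ℝ × ℝ × ℝ) : E :=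
  ((1 : ℂ) / 2) • (pdx F p - Complex.I • pdy F p)

/-- Wirtinger derivative `∂_z̄ = ½(∂_x + i ∂_y)`, entrywise. -/
noncomputable def pdzbar {E : Type*} [NormedAddCommGroup E] [NormedSpace ℂ E]
    (F : ℝ × ℝ × ℝ → E) (p : ℝ × ℝ × ℝ) : E :=
  ((1 : ℂ) / 2) • (pdx F p + Complex.I • pdy F p)

/-- Covariant `z`-derivative `D_z X = ∂_z X + [A_z, X]`. -/
noncomputable def Dz {n : ℕ} (Az X : ℝ × ℝ × ℝ → Matrix (Fin n) (Fin n) ℂ) :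
    ℝ × ℝ × ℝ → Matrix (Fin n) (Fin n) ℂ :=
  fun p => pdz X p + (Az p * X p - X p * Az p)

/-- Covariant `z̄`-derivative `D_z̄ X = ∂_z̄ X + [A_z̄, X]`. -/
noncomputable def Dzbar {n : ℕ} (Azbar X : ℝ × ℝ × ℝ → Matrix (Fin n) (Fin n) ℂ) :
    ℝ × ℝ × ℝ → Matrix (Fin n) (Fin n) ℂ :=
  fun p => pdzbar X p + (Azbar p * X p - X p * Azbar p)

/-- Covariant `t`-derivative `D_t X = ∂_t X + [A_t, X]`. -/
noncomputable def Dt {n : ℕ} (At X : ℝ × ℝ × ℝ → Matrix (Fin n) (Fin n) ℂ) :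
    ℝ × ℝ × ℝ → Matrix (Fin n) (Fin n) ℂ :=
  fun p => pdt X p + (At p * X p - X p * At p)

namespace Stmt6Aux

/-! ### generic partial derivative lemmas -/

section General
variable {E : Type*} [NormedAddCommGroup E] [NormedSpace ℝ E] {F G : ℝ × ℝ × ℝ → E} {p : ℝ × ℝ × ℝ}

theorem curve_x (p : ℝ × ℝ × ℝ) :
    HasDerivAt (fun s : ℝ => (s, p.2.1, p.2.2)) ((1:ℝ),(0:ℝ),(0:ℝ)) p.1 := by
  exact (hasDerivAt_id p.1).prodMk (hasDerivAt_const p.1 (p.2.1, p.2.2))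

theorem curve_y (p : ℝ × ℝ × ℝ) :
    HasDerivAt (fun s : ℝ => (p.1, s, p.2.2)) ((0:ℝ),(1:ℝ),(0:ℝ)) p.2.1 := by
  exact (hasDerivAt_const p.2.1 p.1).prodMk
    ((hasDerivAt_id p.2.1).prodMk (hasDerivAt_const p.2.1 p.2.2))

theorem curve_t (p : ℝ × ℝ × ℝ) :
    HasDerivAt (fun s : ℝ => (p.1, p.2.1, s)) ((0:ℝ),(0:ℝ),(1:ℝ)) p.2.2 := by
  exact (hasDerivAt_const p.2.2 p.1).prodMk
    ((hasDerivAt_const p.2.2 p.2.1).prodMk (hasDerivAt_id p.2.2))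

theorem pdx_eq (h : DifferentiableAt ℝ F p) : pdx F p = fderiv ℝ F p (1,0,0) := by
  have h2 : HasDerivAt (fun s => F (s, p.2.1, p.2.2)) (fderiv ℝ F p (1,0,0)) p.1 := by
    exact h.hasFDerivAt.comp_hasDerivAt p.1 (curve_x p)
  exact h2.deriv

theorem pdy_eq (h : DifferentiableAt ℝ F p) : pdy F p = fderiv ℝ F p (0,1,0) := by
  have h2 : HasDerivAt (fun s => F (p.1, s, p.2.2)) (fderiv ℝ F p (0,1,0)) p.2.1 := by
    exact h.hasFDerivAt.comp_hasDerivAt p.2.1 (curve_y p)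
  exact h2.deriv

theorem pdt_fderiv (h : DifferentiableAt ℝ F p) : pdt F p = fderiv ℝ F p (0,0,1) := by
  have h2 : HasDerivAt (fun s => F (p.1, p.2.1, s)) (fderiv ℝ F p (0,0,1)) p.2.2 := by
    exact h.hasFDerivAt.comp_hasDerivAt p.2.2 (curve_t p)
  exact h2.deriv

theorem pdx_congr (h : F =ᶠ[nhds p] G) : pdx F p = pdx G p :=
  Filter.EventuallyEq.deriv_eq (h.comp_tendsto (curve_x p).continuousAt)

theorem pdy_congr (h : F =ᶠ[nhds p] G) : pdy F p = pdy G p :=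
  Filter.EventuallyEq.deriv_eq (h.comp_tendsto (curve_y p).continuousAt)

theorem pdt_congr (h : F =ᶠ[nhds p] G) : pdt F p = pdt G p :=
  Filter.EventuallyEq.deriv_eq (h.comp_tendsto (curve_t p).continuousAt)

end General

section GeneralC
variable {E : Type*} [NormedAddCommGroup E] [NormedSpace ℂ E] {F G : ℝ × ℝ × ℝ → E} {p : ℝ × ℝ × ℝ}

theorem pdz_congr (h : F =ᶠ[nhds p] G) : pdz F p = pdz G p := by
  unfold pdz; rw [pdx_congr h, pdy_congr h]

theorem pdzbar_congr (h : F =ᶠ[nhds p] G) : pdzbar F p = pdzbar G p := by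
  unfold pdzbar; rw [pdx_congr h, pdy_congr h]

theorem pdz_fderiv (h : DifferentiableAt ℝ F p) :
    pdz F p = ((1:ℂ)/2) • (fderiv ℝ F p (1,0,0) - Complex.I • fderiv ℝ F p (0,1,0)) := by
  unfold pdz; rw [pdx_eq h, pdy_eq h]

theorem pdzbar_fderiv (h : DifferentiableAt ℝ F p) :
    pdzbar F p = ((1:ℂ)/2) • (fderiv ℝ F p (1,0,0) + Complex.I • fderiv ℝ F p (0,1,0)) := by
  unfold pdzbar; rw [pdx_eq h, pdy_eq h]

end GeneralC

end Stmt6Aux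
namespace Stmt6Aux

abbrev Mx (n : ℕ) := Matrix (Fin n) (Fin n) ℂ

noncomputable instance {n : ℕ} : FiniteDimensional ℝ (Mx n) :=
  Module.Finite.trans ℂ _

noncomputable abbrev mxACG (n : ℕ) : AddCommGroup (Mx n) := NormedAddCommGroup.toAddCommGroup
noncomputable abbrev mxACM (n : ℕ) : AddCommMonoid (Mx n) := (mxACG n).toAddCommMonoid
noncomputable abbrev mxTop (n : ℕ) : TopologicalSpace (Mx n) := PseudoMetricSpace.toUniformSpace.toTopologicalSpace
noncomputable abbrev mxMod (n : ℕ) : Module ℝ (Mx n) := NormedSpace.toModule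

attribute [local instance] mxACG mxACM mxTop mxMod

noncomputable def mulCLM {n : ℕ} : Mx n →L[ℝ] Mx n →L[ℝ] Mx n :=
  LinearMap.toContinuousLinearMap <|
    { toFun := fun A => LinearMap.toContinuousLinearMap (LinearMap.mulLeft ℝ A)
      map_add' := by intro A B; ext X; simp [add_mul]
      map_smul' := by intro c A; ext X; simp [smul_mul_assoc] }

@[simp] theorem mulCLM_apply {n : ℕ} (A B : Mx n) : mulCLM A B = A * B := rfl

noncomputable def ctCLM {n : ℕ} : Mx n →L[ℝ] Mx n :=
  LinearMap.toContinuousLinearMap <|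
    { toFun := fun A => Aᴴ
      map_add' := by intro A B; simp
      map_smul' := by intro c A; ext i j; simp }

@[simp] theorem ctCLM_apply {n : ℕ} (A : Mx n) : ctCLM A = Aᴴ := rfl

section Rules
variable {n : ℕ} {F G : ℝ × ℝ × ℝ → Mx n} {p : ℝ × ℝ × ℝ}

theorem diffAt_matmul (hF : DifferentiableAt ℝ F p) (hG : DifferentiableAt ℝ G p) :
    DifferentiableAt ℝ (fun q => F q * G q) p := by
  have h1 : DifferentiableAt ℝ (fun q => mulCLM (F q)) p :=
    DifferentiableAt.comp (g := ⇑(mulCLM (n := n))) p (by exact mulCLM.differentiableAt) hF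
  exact h1.clm_apply hG

theorem fderiv_matmul (hF : DifferentiableAt ℝ F p) (hG : DifferentiableAt ℝ G p) (v : ℝ × ℝ × ℝ) :
    fderiv ℝ (fun q => F q * G q) p v = fderiv ℝ F p v * G p + F p * fderiv ℝ G p v := by
  have h1 : DifferentiableAt ℝ (fun q => mulCLM (F q)) p :=
    DifferentiableAt.comp (g := ⇑(mulCLM (n := n))) p (by exact mulCLM.differentiableAt) hF
  have h3 := fderiv_clm_apply h1 hG
  have h2 : fderiv ℝ (fun q => mulCLM (F q)) p = mulCLM.comp (fderiv ℝ F p) := by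
    rw [show (fun q => mulCLM (F q)) = (⇑(mulCLM (n := n))) ∘ F from rfl]
    erw [fderiv_comp p mulCLM.differentiableAt hF, mulCLM.fderiv]
  rw [h2] at h3
  rw [show (fun q => F q * G q) = fun q => mulCLM (F q) (G q) from rfl, h3]
  simp [add_comm]

theorem diffAt_ct (hF : DifferentiableAt ℝ F p) :
    DifferentiableAt ℝ (fun q => (F q)ᴴ) p := (ctCLM (n := n)).differentiableAt.comp p hF

theorem fderiv_ct (hF : DifferentiableAt ℝ F p) (v : ℝ × ℝ × ℝ) :
    fderiv ℝ (fun q => (F q)ᴴ) p v = (fderiv ℝ F p v)ᴴ := by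
  erw [show (fun q => (F q)ᴴ) = (⇑(ctCLM (n := n))) ∘ F from rfl,
    fderiv_comp (g := ⇑(ctCLM (n := n))) p (by exact ctCLM.differentiableAt) hF]
  simp

/-! pd-level Leibniz rules -/

theorem pdt_add (hF : DifferentiableAt ℝ F p) (hG : DifferentiableAt ℝ G p) :
    pdt (fun q => F q + G q) p = pdt F p + pdt G p := by
  rw [pdt_fderiv (hF.fun_add hG), pdt_fderiv hF, pdt_fderiv hG, fderiv_fun_add hF hG]; simp

theorem pdt_smul (c : ℂ) (hF : DifferentiableAt ℝ F p) :
    pdt (fun q => c • F q) p = c • pdt F p := by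
  rw [pdt_fderiv (hF.fun_const_smul c), pdt_fderiv hF, fderiv_fun_const_smul hF c]; simp

theorem pdt_mul (hF : DifferentiableAt ℝ F p) (hG : DifferentiableAt ℝ G p) :
    pdt (fun q => F q * G q) p = pdt F p * G p + F p * pdt G p := by
  rw [pdt_fderiv (diffAt_matmul hF hG), pdt_fderiv hF, pdt_fderiv hG, fderiv_matmul hF hG]

theorem pdt_ct (hF : DifferentiableAt ℝ F p) :
    pdt (fun q => (F q)ᴴ) p = (pdt F p)ᴴ := by
  rw [pdt_fderiv (diffAt_ct hF), pdt_fderiv hF, fderiv_ct hF]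

theorem pdz_add (hF : DifferentiableAt ℝ F p) (hG : DifferentiableAt ℝ G p) :
    pdz (fun q => F q + G q) p = pdz F p + pdz G p := by
  rw [pdz_fderiv (hF.fun_add hG), pdz_fderiv hF, pdz_fderiv hG, fderiv_fun_add hF hG]
  simp only [ContinuousLinearMap.add_apply]
  module

theorem pdz_smul (c : ℂ) (hF : DifferentiableAt ℝ F p) :
    pdz (fun q => c • F q) p = c • pdz F p := by
  rw [pdz_fderiv (hF.fun_const_smul c), pdz_fderiv hF, fderiv_fun_const_smul hF c]
  simp only [ContinuousLinearMap.coe_smul', Pi.smul_apply]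
  module

theorem pdz_mul (hF : DifferentiableAt ℝ F p) (hG : DifferentiableAt ℝ G p) :
    pdz (fun q => F q * G q) p = pdz F p * G p + F p * pdz G p := by
  rw [pdz_fderiv (diffAt_matmul hF hG), pdz_fderiv hF, pdz_fderiv hG,
    fderiv_matmul hF hG, fderiv_matmul hF hG]
  simp only [smul_sub, smul_add, sub_mul, add_mul, smul_mul_assoc, mul_sub, mul_add,
    mul_smul_comm]
  module

theorem pdzbar_add (hF : DifferentiableAt ℝ F p) (hG : DifferentiableAt ℝ G p) :
    pdzbar (fun q => F q + G q) p = pdzbar F p + pdzbar G p := by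
  rw [pdzbar_fderiv (hF.fun_add hG), pdzbar_fderiv hF, pdzbar_fderiv hG, fderiv_fun_add hF hG]
  simp only [ContinuousLinearMap.add_apply]
  module

theorem pdzbar_smul (c : ℂ) (hF : DifferentiableAt ℝ F p) :
    pdzbar (fun q => c • F q) p = c • pdzbar F p := by
  rw [pdzbar_fderiv (hF.fun_const_smul c), pdzbar_fderiv hF, fderiv_fun_const_smul hF c]
  simp only [ContinuousLinearMap.coe_smul', Pi.smul_apply]
  module

theorem pdzbar_mul (hF : DifferentiableAt ℝ F p) (hG : DifferentiableAt ℝ G p) :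
    pdzbar (fun q => F q * G q) p = pdzbar F p * G p + F p * pdzbar G p := by
  rw [pdzbar_fderiv (diffAt_matmul hF hG), pdzbar_fderiv hF, pdzbar_fderiv hG,
    fderiv_matmul hF hG, fderiv_matmul hF hG]
  simp only [smul_sub, smul_add, sub_mul, add_mul, smul_mul_assoc, mul_sub, mul_add,
    mul_smul_comm]
  module

theorem pdz_ct (hF : DifferentiableAt ℝ F p) :
    pdz (fun q => (F q)ᴴ) p = (pdzbar F p)ᴴ := by
  rw [pdz_fderiv (diffAt_ct hF), pdzbar_fderiv hF, fderiv_ct hF, fderiv_ct hF]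
  simp only [conjTranspose_smul, conjTranspose_add, conjTranspose_sub, Complex.star_def,
    Complex.conj_I, map_div₀, _root_.map_one, map_ofNat]
  module

theorem pdzbar_ct (hF : DifferentiableAt ℝ F p) :
    pdzbar (fun q => (F q)ᴴ) p = (pdz F p)ᴴ := by
  rw [pdzbar_fderiv (diffAt_ct hF), pdz_fderiv hF, fderiv_ct hF, fderiv_ct hF]
  simp only [conjTranspose_smul, conjTranspose_add, conjTranspose_sub, Complex.star_def,
    Complex.conj_I, map_div₀, _root_.map_one, map_ofNat]
  module

theorem pdt_sub (hF : DifferentiableAt ℝ F p) (hG : DifferentiableAt ℝ G p) :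
    pdt (fun q => F q - G q) p = pdt F p - pdt G p := by
  rw [pdt_fderiv (hF.fun_sub hG), pdt_fderiv hF, pdt_fderiv hG, fderiv_fun_sub hF hG]; simp

theorem pdz_sub (hF : DifferentiableAt ℝ F p) (hG : DifferentiableAt ℝ G p) :
    pdz (fun q => F q - G q) p = pdz F p - pdz G p := by
  rw [pdz_fderiv (hF.fun_sub hG), pdz_fderiv hF, pdz_fderiv hG, fderiv_fun_sub hF hG]
  simp only [ContinuousLinearMap.coe_sub', Pi.sub_apply]
  module

theorem pdzbar_sub (hF : DifferentiableAt ℝ F p) (hG : DifferentiableAt ℝ G p) :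
    pdzbar (fun q => F q - G q) p = pdzbar F p - pdzbar G p := by
  rw [pdzbar_fderiv (hF.fun_sub hG), pdzbar_fderiv hF, pdzbar_fderiv hG, fderiv_fun_sub hF hG]
  simp only [ContinuousLinearMap.coe_sub', Pi.sub_apply]
  module

theorem pdz_neg (hF : DifferentiableAt ℝ F p) :
    pdz (fun q => -F q) p = -pdz F p := by
  rw [pdz_fderiv hF.fun_neg, pdz_fderiv hF, fderiv_fun_neg]
  simp only [ContinuousLinearMap.neg_apply]
  module

end Rules

section Clairaut
variable {n : ℕ} {U : Set (ℝ × ℝ × ℝ)} {η : ℝ × ℝ × ℝ → Mx n} {p : ℝ × ℝ × ℝ}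

theorem fderiv_eval {H : ℝ × ℝ × ℝ → (ℝ × ℝ × ℝ) →L[ℝ] Mx n}
    (hH : DifferentiableAt ℝ H p) (w v : ℝ × ℝ × ℝ) :
    fderiv ℝ (fun q => H q w) p v = fderiv ℝ H p v w := by
  rw [fderiv_clm_apply hH (differentiableAt_const w)]
  simp

theorem clairaut_aux (hU : IsOpen U) (hη : ContDiffOn ℝ (⊤ : ℕ∞) η U) (hp : p ∈ U) :
    DifferentiableAt ℝ (fun q => pdz η q) p ∧ DifferentiableAt ℝ (fun q => pdzbar η q) p ∧
      pdzbar (fun q => pdz η q) p = pdz (fun q => pdzbar η q) p := by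
  have hηd : ∀ q ∈ U, DifferentiableAt ℝ η q := fun q hq =>
    (hη.contDiffAt (hU.mem_nhds hq)).differentiableAt (by simp)
  set η₁ : ℝ × ℝ × ℝ → (ℝ × ℝ × ℝ) →L[ℝ] Mx n := fun q => fderiv ℝ η q with hη₁def
  have hη₁ : ContDiffOn ℝ (⊤ : ℕ∞) η₁ U := hη.fderiv_of_isOpen hU (by simp)
  have hη₁p : DifferentiableAt ℝ η₁ p :=
    (hη₁.contDiffAt (hU.mem_nhds hp)).differentiableAt (by simp)
  have hA : DifferentiableAt ℝ (fun q => η₁ q (1,0,0)) p :=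
    hη₁p.clm_apply (differentiableAt_const _)
  have hB : DifferentiableAt ℝ (fun q => η₁ q (0,1,0)) p :=
    hη₁p.clm_apply (differentiableAt_const _)
  set G : ℝ × ℝ × ℝ → Mx n :=
    fun q => ((1:ℂ)/2) • (η₁ q (1,0,0) - Complex.I • η₁ q (0,1,0)) with hGdef
  set Gb : ℝ × ℝ × ℝ → Mx n :=
    fun q => ((1:ℂ)/2) • (η₁ q (1,0,0) + Complex.I • η₁ q (0,1,0)) with hGbdef
  have hGd : DifferentiableAt ℝ G p := ((hA.fun_sub (hB.fun_const_smul Complex.I)).fun_const_smul _)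
  have hGbd : DifferentiableAt ℝ Gb p := ((hA.fun_add (hB.fun_const_smul Complex.I)).fun_const_smul _)
  have hevz : (fun q => pdz η q) =ᶠ[nhds p] G :=
    Filter.eventuallyEq_of_mem (hU.mem_nhds hp) (fun q hq => pdz_fderiv (hηd q hq))
  have hevzb : (fun q => pdzbar η q) =ᶠ[nhds p] Gb :=
    Filter.eventuallyEq_of_mem (hU.mem_nhds hp) (fun q hq => pdzbar_fderiv (hηd q hq))
  refine ⟨hevz.differentiableAt_iff.mpr hGd, hevzb.differentiableAt_iff.mpr hGbd, ?_⟩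
  rw [pdzbar_congr hevz, pdz_congr hevzb, pdzbar_fderiv hGd, pdz_fderiv hGbd]
  have dG : ∀ v, fderiv ℝ G p v
      = ((1:ℂ)/2) • (fderiv ℝ η₁ p v (1,0,0) - Complex.I • fderiv ℝ η₁ p v (0,1,0)) := by
    intro v
    rw [hGdef, fderiv_fun_const_smul (hA.fun_sub (hB.fun_const_smul Complex.I)) ((1:ℂ)/2)]
    simp only [ContinuousLinearMap.coe_smul', Pi.smul_apply]
    rw [fderiv_fun_sub hA (hB.fun_const_smul Complex.I)]
    simp only [ContinuousLinearMap.coe_sub', Pi.sub_apply]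
    rw [fderiv_fun_const_smul hB Complex.I]
    simp only [ContinuousLinearMap.coe_smul', Pi.smul_apply]
    rw [fderiv_eval hη₁p, fderiv_eval hη₁p]
  have dGb : ∀ v, fderiv ℝ Gb p v
      = ((1:ℂ)/2) • (fderiv ℝ η₁ p v (1,0,0) + Complex.I • fderiv ℝ η₁ p v (0,1,0)) := by
    intro v
    rw [hGbdef, fderiv_fun_const_smul (hA.fun_add (hB.fun_const_smul Complex.I)) ((1:ℂ)/2)]
    simp only [ContinuousLinearMap.coe_smul', Pi.smul_apply]
    rw [fderiv_fun_add hA (hB.fun_const_smul Complex.I)]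
    simp only [ContinuousLinearMap.coe_add', Pi.add_apply]
    rw [fderiv_fun_const_smul hB Complex.I]
    simp only [ContinuousLinearMap.coe_smul', Pi.smul_apply]
    rw [fderiv_eval hη₁p, fderiv_eval hη₁p]
  rw [dG, dG, dGb, dGb]
  have hsym : fderiv ℝ η₁ p ((1:ℝ),(0:ℝ),(0:ℝ)) ((0:ℝ),(1:ℝ),(0:ℝ))
      = fderiv ℝ η₁ p ((0:ℝ),(1:ℝ),(0:ℝ)) ((1:ℝ),(0:ℝ),(0:ℝ)) := by
    have hf : ∀ᶠ q in nhds p, HasFDerivAt η (η₁ q) q :=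
      Filter.eventually_of_mem (hU.mem_nhds hp) (fun q hq => (hηd q hq).hasFDerivAt)
    exact second_derivative_symmetric_of_eventually hf hη₁p.hasFDerivAt _ _
  rw [hsym]
  module

end Clairaut
end Stmt6Aux


open Stmt6Aux in
/-- Linearized Bogomolny system implies the elliptic equation
`D_z̄ D_z (η + η*) + ρ (D_t - iΦ)(D_t + iΦ)(η + η*) = 0`. -/
theorem stmt6 (n : ℕ) (U : Set (ℝ × ℝ × ℝ)) (hU : IsOpen U)
    (ρ : ℝ × ℝ × ℝ → ℝ)
    (Az At Φ η az a_t φ : ℝ × ℝ × ℝ → Matrix (Fin n) (Fin n) ℂ)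
    (Azbar azbar : ℝ × ℝ × ℝ → Matrix (Fin n) (Fin n) ℂ)
    (hAzbar : Azbar = fun p => -(Az p)ᴴ) (hazbar : azbar = fun p => -(az p)ᴴ)
    (hρ : ContDiffOn ℝ (⊤ : ℕ∞) ρ U) (hAz : ContDiffOn ℝ (⊤ : ℕ∞) Az U)
    (hAt : ContDiffOn ℝ (⊤ : ℕ∞) At U) (hΦ : ContDiffOn ℝ (⊤ : ℕ∞) Φ U)
    (hη : ContDiffOn ℝ (⊤ : ℕ∞) η U) (haz : ContDiffOn ℝ (⊤ : ℕ∞) az U)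
    (hat : ContDiffOn ℝ (⊤ : ℕ∞) a_t U) (hφ : ContDiffOn ℝ (⊤ : ℕ∞) φ U)
    (hAtskew : ∀ p ∈ U, (At p)ᴴ = -At p) (hΦskew : ∀ p ∈ U, (Φ p)ᴴ = -Φ p)
    (hatskew : ∀ p ∈ U, (a_t p)ᴴ = -a_t p) (hφskew : ∀ p ∈ U, (φ p)ᴴ = -φ p)
    -- (B) the real Bogomolny equation
    (hB : ∀ p ∈ U,
      pdzbar Az p - pdz Azbar p + (Azbar p * Az p - Az p * Azbar p)
        = ((-2 : ℂ) * Complex.I * (ρ p : ℂ)) •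
            (pdt Φ p + (At p * Φ p - Φ p * At p)))
    -- (L1) D_t η - [iΦ, η] = -(a_t - iφ)
    (hL1 : ∀ p ∈ U,
      Dt At η p - Complex.I • (Φ p * η p - η p * Φ p) = -(a_t p - Complex.I • φ p))
    -- (L2) D_z̄ η = -a_z̄
    (hL2 : ∀ p ∈ U, Dzbar Azbar η p = -azbar p)
    -- (L3) linearized real Bogomolny equation
    (hL3 : ∀ p ∈ U,
      Dzbar Azbar az p - Dz Az azbar p
        = (ρ p : ℂ) •
          ((Dt At (fun q => a_t q - Complex.I • φ q) p
              + Complex.I • (Φ p * (a_t p - Complex.I • φ p)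
                  - (a_t p - Complex.I • φ p) * Φ p))
            - (Dt At (fun q => a_t q + Complex.I • φ q) p
              - Complex.I • (Φ p * (a_t p + Complex.I • φ p)
                  - (a_t p + Complex.I • φ p) * Φ p)))) :
    ∀ p ∈ U,
      Dzbar Azbar (Dz Az (fun q => η q + (η q)ᴴ)) p
        + (ρ p : ℂ) •
          (Dt At (fun q => Dt At (fun q' => η q' + (η q')ᴴ) q
              + Complex.I • (Φ q * (η q + (η q)ᴴ) - (η q + (η q)ᴴ) * Φ q)) p
            - Complex.I •
              (Φ p * (Dt At (fun q' => η q' + (η q')ᴴ) p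
                  + Complex.I • (Φ p * (η p + (η p)ᴴ) - (η p + (η p)ᴴ) * Φ p))
                - (Dt At (fun q' => η q' + (η q')ᴴ) p
                  + Complex.I • (Φ p * (η p + (η p)ᴴ) - (η p + (η p)ᴴ) * Φ p)) * Φ p))
        = 0 := by
  intro p hp
  have hdiff : ∀ {F : ℝ × ℝ × ℝ → Matrix (Fin n) (Fin n) ℂ},
      ContDiffOn ℝ (⊤ : ℕ∞) F U → ∀ q ∈ U, DifferentiableAt ℝ F q := fun hF q hq =>
    (hF.contDiffAt (hU.mem_nhds hq)).differentiableAt (by simp)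
  have dη := hdiff hη
  have dAz := hdiff hAz
  have dAt := hdiff hAt
  have dΦ := hdiff hΦ
  have daz := hdiff haz
  have dat := hdiff hat
  have dφ := hdiff hφ
  have dAzbar : ∀ q ∈ U, DifferentiableAt ℝ Azbar q := by
    rw [hAzbar]; exact fun q hq => (diffAt_ct (dAz q hq)).neg
  have dazbar : ∀ q ∈ U, DifferentiableAt ℝ azbar q := by
    rw [hazbar]; exact fun q hq => (diffAt_ct (daz q hq)).neg
  -- L1 solved for pdt η
  have hpdtη : ∀ q ∈ U, pdt η q
      = Complex.I • (Φ q * η q - η q * Φ q) - (a_t q - Complex.I • φ q)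
        - (At q * η q - η q * At q) := by
    intro q hq
    have h := hL1 q hq
    simp only [Dt] at h
    linear_combination (norm := module) h
  -- L2 solved for pdzbar η
  have hpdzbarη : ∀ q ∈ U, pdzbar η q
      = -azbar q - (Azbar q * η q - η q * Azbar q) := by
    intro q hq
    have h := hL2 q hq
    simp only [Dzbar] at h
    linear_combination (norm := module) h
  -- the function inside the t-part equals K on U
  have hGK : ∀ q ∈ U,
      Dt At (fun q' => η q' + (η q')ᴴ) q
          + Complex.I • (Φ q * (η q + (η q)ᴴ) - (η q + (η q)ᴴ) * Φ q)
        = (2 * Complex.I : ℂ) • (φ q + (Φ q * η q - η q * Φ q)) := by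
    intro q hq
    have e1 : pdt (fun q' => η q' + (η q')ᴴ) q = pdt η q + (pdt η q)ᴴ := by
      rw [pdt_add (dη q hq) (diffAt_ct (dη q hq)), pdt_ct (dη q hq)]
    simp only [Dt]
    rw [e1, hpdtη q hq]
    simp only [conjTranspose_add, conjTranspose_sub, conjTranspose_mul, conjTranspose_smul,
      conjTranspose_neg, Complex.star_def, Complex.conj_I, hΦskew q hq, hatskew q hq,
      hφskew q hq, hAtskew q hq]
    simp only [mul_add, add_mul, mul_sub, sub_mul, mul_neg, neg_mul, smul_add, smul_sub,
      smul_smul, mul_smul_comm, smul_mul_assoc, neg_neg, neg_smul, smul_neg]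
    module
  -- D_z M = pdz η + [Az, η] + az on U
  have hDzM : ∀ q ∈ U,
      Dz Az (fun q' => η q' + (η q')ᴴ) q
        = pdz η q + (Az q * η q - η q * Az q) + az q := by
    intro q hq
    have e1 : pdz (fun q' => η q' + (η q')ᴴ) q = pdz η q + (pdzbar η q)ᴴ := by
      rw [pdz_add (dη q hq) (diffAt_ct (dη q hq)), pdz_ct (dη q hq)]
    simp only [Dz]
    rw [e1, hpdzbarη q hq, hAzbar, hazbar]
    simp only [conjTranspose_add, conjTranspose_sub, conjTranspose_mul, conjTranspose_neg,
      conjTranspose_conjTranspose]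
    simp only [mul_add, add_mul, mul_sub, sub_mul, mul_neg, neg_mul, neg_neg]
    module
  obtain ⟨hdzη, hdzbarη, hclair⟩ := clairaut_aux hU hη hp
  have hcommAzη : DifferentiableAt ℝ (fun q => Az q * η q - η q * Az q) p :=
    (diffAt_matmul (dAz p hp) (dη p hp)).sub (diffAt_matmul (dη p hp) (dAz p hp))
  have hcommAzbarη : DifferentiableAt ℝ (fun q => Azbar q * η q - η q * Azbar q) p :=
    (diffAt_matmul (dAzbar p hp) (dη p hp)).sub (diffAt_matmul (dη p hp) (dAzbar p hp))
  have hcommΦη : DifferentiableAt ℝ (fun q => Φ q * η q - η q * Φ q) p :=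
    (diffAt_matmul (dΦ p hp) (dη p hp)).sub (diffAt_matmul (dη p hp) (dΦ p hp))
  have hevL : (Dz Az (fun q' => η q' + (η q')ᴴ))
      =ᶠ[nhds p] (fun q => pdz η q + (Az q * η q - η q * Az q) + az q) :=
    Filter.eventuallyEq_of_mem (hU.mem_nhds hp) hDzM
  have hevG : (fun q => Dt At (fun q' => η q' + (η q')ᴴ) q
        + Complex.I • (Φ q * (η q + (η q)ᴴ) - (η q + (η q)ᴴ) * Φ q))
      =ᶠ[nhds p] (fun q => (2 * Complex.I : ℂ) • (φ q + (Φ q * η q - η q * Φ q))) :=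
    Filter.eventuallyEq_of_mem (hU.mem_nhds hp) hGK
  -- expansion of the z̄-derivative of the rewritten D_z M
  have hpdzbarL : pdzbar (fun q => pdz η q + (Az q * η q - η q * Az q) + az q) p
      = pdz (fun q => -azbar q - (Azbar q * η q - η q * Azbar q)) p
        + (pdzbar Az p * η p + Az p * pdzbar η p
            - (pdzbar η p * Az p + η p * pdzbar Az p))
        + pdzbar az p := by
    rw [pdzbar_add (hdzη.fun_add hcommAzη) (daz p hp), pdzbar_add hdzη hcommAzη,
      pdzbar_sub (diffAt_matmul (dAz p hp) (dη p hp)) (diffAt_matmul (dη p hp) (dAz p hp)),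
      pdzbar_mul (dAz p hp) (dη p hp), pdzbar_mul (dη p hp) (dAz p hp), hclair,
      pdz_congr (Filter.eventuallyEq_of_mem (hU.mem_nhds hp) hpdzbarη)]
  have hpdzX : pdz (fun q => -azbar q - (Azbar q * η q - η q * Azbar q)) p
      = -pdz azbar p - (pdz Azbar p * η p + Azbar p * pdz η p
          - (pdz η p * Azbar p + η p * pdz Azbar p)) := by
    rw [pdz_sub (dazbar p hp).fun_neg
        ((diffAt_matmul (dAzbar p hp) (dη p hp)).fun_sub (diffAt_matmul (dη p hp) (dAzbar p hp))),
      pdz_neg (dazbar p hp),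
      pdz_sub (diffAt_matmul (dAzbar p hp) (dη p hp)) (diffAt_matmul (dη p hp) (dAzbar p hp)),
      pdz_mul (dAzbar p hp) (dη p hp), pdz_mul (dη p hp) (dAzbar p hp)]
  have hpdtK : pdt (fun q => (2 * Complex.I : ℂ) • (φ q + (Φ q * η q - η q * Φ q))) p
      = (2 * Complex.I : ℂ) • (pdt φ p + (pdt Φ p * η p + Φ p * pdt η p
          - (pdt η p * Φ p + η p * pdt Φ p))) := by
    rw [pdt_smul _ ((dφ p hp).fun_add hcommΦη), pdt_add (dφ p hp) hcommΦη,
      pdt_sub (diffAt_matmul (dΦ p hp) (dη p hp)) (diffAt_matmul (dη p hp) (dΦ p hp)),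
      pdt_mul (dΦ p hp) (dη p hp), pdt_mul (dη p hp) (dΦ p hp)]
  -- solved forms of the Bogomolny and linearized equations at p
  have hBsolved : pdzbar Az p
      = pdz Azbar p - (Azbar p * Az p - Az p * Azbar p)
        + ((-2 : ℂ) * Complex.I * (ρ p : ℂ)) • (pdt Φ p + (At p * Φ p - Φ p * At p)) := by
    linear_combination (norm := module) hB p hp
  have hL3e := hL3 p hp
  simp only [Dzbar, Dz, Dt] at hL3e
  rw [pdt_sub (dat p hp) ((dφ p hp).fun_const_smul Complex.I),
    pdt_add (dat p hp) ((dφ p hp).fun_const_smul Complex.I),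
    pdt_smul Complex.I (dφ p hp)] at hL3e
  have hL3solved : pdzbar az p
      = pdz azbar p + (Az p * azbar p - azbar p * Az p) - (Azbar p * az p - az p * Azbar p)
        + (ρ p : ℂ) •
          (((pdt a_t p - Complex.I • pdt φ p
              + (At p * (a_t p - Complex.I • φ p) - (a_t p - Complex.I • φ p) * At p))
              + Complex.I • (Φ p * (a_t p - Complex.I • φ p)
                  - (a_t p - Complex.I • φ p) * Φ p))
            - ((pdt a_t p + Complex.I • pdt φ p
              + (At p * (a_t p + Complex.I • φ p) - (a_t p + Complex.I • φ p) * At p))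
              - Complex.I • (Φ p * (a_t p + Complex.I • φ p)
                  - (a_t p + Complex.I • φ p) * Φ p))) := by
    linear_combination (norm := module) hL3e
  -- now rewrite the goal
  have uDzbar : ∀ X : ℝ × ℝ × ℝ → Matrix (Fin n) (Fin n) ℂ,
      Dzbar Azbar X p = pdzbar X p + (Azbar p * X p - X p * Azbar p) := fun _ => rfl
  have uDt : ∀ X : ℝ × ℝ × ℝ → Matrix (Fin n) (Fin n) ℂ,
      Dt At X p = pdt X p + (At p * X p - X p * At p) := fun _ => rfl
  rw [hGK p hp]
  rw [uDt (fun q => Dt At (fun q' => η q' + (η q')ᴴ) q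
        + Complex.I • (Φ q * (η q + (η q)ᴴ) - (η q + (η q)ᴴ) * Φ q)),
    pdt_congr hevG]
  rw [uDzbar (Dz Az (fun q' => η q' + (η q')ᴴ)), pdzbar_congr hevL]
  rw [show (Dz Az (fun q' => η q' + (η q')ᴴ)) p
      = pdz η p + (Az p * η p - η p * Az p) + az p from hDzM p hp]
  rw [hGK p hp]
  rw [hpdzbarL, hpdzX, hpdtK, hBsolved, hL3solved, hpdzbarη p hp, hpdtη p hp]
  simp only [mul_add, add_mul, mul_sub, sub_mul, mul_neg, neg_mul, smul_add, smul_sub,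
    smul_smul, mul_smul_comm, smul_mul_assoc, neg_neg, neg_smul, smul_neg, mul_assoc]
  module
end

section
/- Let U ⊆ ℝ³ be open with coordinates (x,y,t) and z = x+iy, let ρ : U → ℝ be smooth, and let H₁, H₂ : U → M_n(ℂ) be smooth functions whose values are Hermitian positive definite matrices, each satisfying the equation ∂_{z̄}(H_j⁻¹ ∂_z H_j) + ρ ∂_t(H_j⁻¹ ∂_t H_j) = 0 on U (j = 1,2). Set h := H₁⁻¹ H₂. Then ∂_{z̄}( h⁻¹( ∂_z h + [H₁⁻¹ ∂_z H₁, h] ) ) + ρ ∂_t( h⁻¹( ∂_t h + [H₁⁻¹ ∂_t H₁, h] ) ) = 0 on U. -/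
open Matrix
open scoped ComplexOrder

attribute [local instance] Matrix.normedAddCommGroup Matrix.normedSpace

variable {n : ℕ}

noncomputable def mulL (n : ℕ) : Matrix (Fin n) (Fin n) ℂ →L[ℝ] Matrix (Fin n) (Fin n) ℂ →L[ℝ] Matrix (Fin n) (Fin n) ℂ :=
  LinearMap.toContinuousLinearMap
    { toFun := fun a => LinearMap.toContinuousLinearMap (LinearMap.mul ℝ (Matrix (Fin n) (Fin n) ℂ) a)
      map_add' := by intro a b; ext x; simp [add_mul]
      map_smul' := by intro c a; ext x; simp }

@[simp] lemma mulL_apply (a b : Matrix (Fin n) (Fin n) ℂ) : mulL n a b = a * b := rfl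

lemma HasDerivAt.matMul {f g : ℝ → Matrix (Fin n) (Fin n) ℂ} {f' g' : Matrix (Fin n) (Fin n) ℂ} {x : ℝ}
    (hf : HasDerivAt f f' x) (hg : HasDerivAt g g' x) :
    HasDerivAt (fun s => f s * g s) (f' * g x + f x * g') x := by
  letI : NormedAddCommGroup (Matrix (Fin n) (Fin n) ℂ →L[ℝ] Matrix (Fin n) (Fin n) ℂ) :=
    ContinuousLinearMap.toNormedAddCommGroup
  letI : NormedSpace ℝ (Matrix (Fin n) (Fin n) ℂ →L[ℝ] Matrix (Fin n) (Fin n) ℂ) :=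
    ContinuousLinearMap.toNormedSpace
  have h1 : HasDerivAt (fun s => mulL n (f s)) (mulL n f') x :=
    (mulL n).hasFDerivAt.comp_hasDerivAt x hf
  exact h1.clm_apply hg

lemma ContDiffOn.matMul {F G : ℝ × ℝ × ℝ → Matrix (Fin n) (Fin n) ℂ} {U : Set (ℝ × ℝ × ℝ)}
    (hF : ContDiffOn ℝ (⊤ : ℕ∞) F U) (hG : ContDiffOn ℝ (⊤ : ℕ∞) G U) :
    ContDiffOn ℝ (⊤ : ℕ∞) (fun q => F q * G q) U := by
  have := ((mulL n).isBoundedBilinearMap.contDiff).comp_contDiffOn (hF.prodMk hG)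
  exact this


lemma contDiffOn_det {F : ℝ × ℝ × ℝ → Matrix (Fin n) (Fin n) ℂ} {U : Set (ℝ × ℝ × ℝ)}
    (hF : ContDiffOn ℝ (⊤ : ℕ∞) F U) : ContDiffOn ℝ (⊤ : ℕ∞) (fun q => (F q).det) U := by
  have hent : ∀ i j, ContDiffOn ℝ (⊤ : ℕ∞) (fun q => F q i j) U := fun i j =>
    (contDiffOn_pi.mp ((contDiffOn_pi.mp hF) i)) j
  have : ∀ q, (F q).det = ∑ σ : Equiv.Perm (Fin n),
      (Equiv.Perm.sign σ : ℂ) * ∏ i, F q (σ i) i := by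
    intro q; rw [Matrix.det_apply]; simp [Units.smul_def, zsmul_eq_mul]
  rw [show (fun q => (F q).det) = fun q => ∑ σ : Equiv.Perm (Fin n),
      (Equiv.Perm.sign σ : ℂ) * ∏ i, F q (σ i) i from funext this]
  apply ContDiffOn.sum
  intro σ _
  exact (contDiffOn_const).mul (contDiffOn_prod fun i _ => hent (σ i) i)

lemma contDiffOn_matInv {F : ℝ × ℝ × ℝ → Matrix (Fin n) (Fin n) ℂ} {U : Set (ℝ × ℝ × ℝ)}
    (hF : ContDiffOn ℝ (⊤ : ℕ∞) F U) (hdet : ∀ p ∈ U, (F p).det ≠ 0) :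
    ContDiffOn ℝ (⊤ : ℕ∞) (fun q => (F q)⁻¹) U := by
  have hadj : ∀ i j : Fin n, ContDiffOn ℝ (⊤ : ℕ∞) (fun q => (F q).adjugate i j) U := by
    intro i j
    have : ∀ q, (F q).adjugate i j = ((F q).updateRow j (Pi.single i 1)).det := fun q =>
      Matrix.adjugate_apply _ _ _
    rw [show (fun q => (F q).adjugate i j)
        = fun q => ((F q).updateRow j (Pi.single i 1)).det from funext this]
    apply contDiffOn_det
    refine contDiffOn_pi.mpr fun a => contDiffOn_pi.mpr fun b => ?_
    by_cases hab : a = j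
    · subst hab; simp [Matrix.updateRow_apply]; exact contDiffOn_const
    · simp [Matrix.updateRow_apply, hab]
      exact (contDiffOn_pi.mp ((contDiffOn_pi.mp hF) a)) b
  refine contDiffOn_pi.mpr fun i => contDiffOn_pi.mpr fun j => ?_
  have : ∀ q ∈ U, (F q)⁻¹ i j = ((F q).det)⁻¹ * (F q).adjugate i j := by
    intro q hq
    rw [Matrix.inv_def, Ring.inverse_eq_inv']
    simp [Matrix.smul_apply, smul_eq_mul]
  refine ContDiffOn.congr ?_ this
  exact ((contDiffOn_det hF).inv hdet).mul (hadj i j)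

section curves
variable {W : Type*} [NormedAddCommGroup W] [NormedSpace ℝ W]
variable {U : Set (ℝ × ℝ × ℝ)} {p : ℝ × ℝ × ℝ} {c : ℝ → ℝ × ℝ × ℝ} {x₀ : ℝ}

lemma curveDiff {F : ℝ × ℝ × ℝ → W} (hF : ContDiffOn ℝ (⊤ : ℕ∞) F U) (hU : IsOpen U)
    (hc : DifferentiableAt ℝ c x₀) (hcx : c x₀ = p) (hp : p ∈ U) :
    DifferentiableAt ℝ (fun s => F (c s)) x₀ := by
  have h1 : DifferentiableAt ℝ F p :=
    (hF.contDiffAt (hU.mem_nhds hp)).differentiableAt (by simp)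
  rw [← hcx] at h1
  exact h1.comp x₀ hc

lemma curve_congr {F G : ℝ × ℝ × ℝ → W} (hFG : ∀ q ∈ U, F q = G q) (hU : IsOpen U)
    (hc : ContinuousAt c x₀) (hcx : c x₀ = p) (hp : p ∈ U) :
    deriv (fun s => F (c s)) x₀ = deriv (fun s => G (c s)) x₀ := by
  apply Filter.EventuallyEq.deriv_eq
  have : ∀ᶠ s in nhds x₀, c s ∈ U := by
    have : U ∈ nhds (c x₀) := hcx ▸ hU.mem_nhds hp
    exact hc.preimage_mem_nhds this
  filter_upwards [this] with s hs using hFG _ hs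

lemma curve_sub {F G : ℝ × ℝ × ℝ → W}
    (hf : DifferentiableAt ℝ (fun s => F (c s)) x₀)
    (hg : DifferentiableAt ℝ (fun s => G (c s)) x₀) :
    deriv (fun s => F (c s) - G (c s)) x₀
      = deriv (fun s => F (c s)) x₀ - deriv (fun s => G (c s)) x₀ :=
  deriv_sub hf hg

end curves

section mcurves
variable {U : Set (ℝ × ℝ × ℝ)} {p : ℝ × ℝ × ℝ} {c : ℝ → ℝ × ℝ × ℝ} {x₀ : ℝ}

lemma curve_mul {F G : ℝ × ℝ × ℝ → Matrix (Fin n) (Fin n) ℂ}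
    (hf : DifferentiableAt ℝ (fun s => F (c s)) x₀)
    (hg : DifferentiableAt ℝ (fun s => G (c s)) x₀) :
    deriv (fun s => F (c s) * G (c s)) x₀
      = deriv (fun s => F (c s)) x₀ * G (c x₀) + F (c x₀) * deriv (fun s => G (c s)) x₀ :=
  (hf.hasDerivAt.matMul hg.hasDerivAt).deriv

lemma curve_inv {H : ℝ × ℝ × ℝ → Matrix (Fin n) (Fin n) ℂ} (hH : ContDiffOn ℝ (⊤ : ℕ∞) H U) (hU : IsOpen U)
    (hdet : ∀ q ∈ U, (H q).det ≠ 0)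
    (hc : DifferentiableAt ℝ c x₀) (hcx : c x₀ = p) (hp : p ∈ U) :
    deriv (fun s => (H (c s))⁻¹) x₀
      = -((H p)⁻¹ * deriv (fun s => H (c s)) x₀ * (H p)⁻¹) := by
  have hK : ContDiffOn ℝ (⊤ : ℕ∞) (fun q => (H q)⁻¹) U := contDiffOn_matInv hH hdet
  have hdf : DifferentiableAt ℝ (fun s => H (c s)) x₀ := curveDiff hH hU hc hcx hp
  have hdk : DifferentiableAt ℝ (fun s => (H (c s))⁻¹) x₀ := curveDiff hK hU hc hcx hp
  have h0 : deriv (fun s => H (c s) * (H (c s))⁻¹) x₀ = 0 := by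
    have := curve_congr (U := U) (F := fun q => H q * (H q)⁻¹) (G := fun _ => (1 : Matrix (Fin n) (Fin n) ℂ))
      (fun q hq => Matrix.mul_nonsing_inv _ (isUnit_iff_ne_zero.mpr (hdet q hq))) hU
      hc.continuousAt hcx hp
    exact this.trans (deriv_const _ _)
  rw [curve_mul (F := H) (G := fun q => (H q)⁻¹) hdf hdk, hcx] at h0
  have hiu : IsUnit (H p).det := isUnit_iff_ne_zero.mpr (hdet p hp)
  have h1 := congrArg (fun X => (H p)⁻¹ * X) h0
  simp only [mul_add, mul_zero, ← mul_assoc, Matrix.nonsing_inv_mul _ hiu, one_mul] at h1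
  exact eq_neg_of_add_eq_zero_right h1
end mcurves

section alg

lemma keyAlg (P₁ P₂ d₁ d₂ : Matrix (Fin n) (Fin n) ℂ) (h₁ : IsUnit P₁.det) (h₂ : IsUnit P₂.det) :
    (P₁⁻¹ * P₂)⁻¹ * ((-(P₁⁻¹ * d₁ * P₁⁻¹) * P₂ + P₁⁻¹ * d₂)
      + ((P₁⁻¹ * d₁) * (P₁⁻¹ * P₂) - (P₁⁻¹ * P₂) * (P₁⁻¹ * d₁)))
      = P₂⁻¹ * d₂ - P₁⁻¹ * d₁ := by
  rw [Matrix.mul_inv_rev, Matrix.nonsing_inv_nonsing_inv _ h₁]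
  simp only [mul_add, mul_sub, add_mul, sub_mul, neg_mul, mul_neg, mul_assoc,
    Matrix.mul_nonsing_inv_cancel_left _ _ h₁, Matrix.nonsing_inv_mul_cancel_left _ _ h₂]
  abel

noncomputable def zcomb (X Y : Matrix (Fin n) (Fin n) ℂ) : Matrix (Fin n) (Fin n) ℂ := ((1 : ℂ) / 2) • (X - Complex.I • Y)

lemma zcomb_formula (M₁ M₂ M₃ d₁x d₁y d₂x d₂y : Matrix (Fin n) (Fin n) ℂ) :
    zcomb (M₁ * d₁x * M₂ + M₃ * d₂x) (M₁ * d₁y * M₂ + M₃ * d₂y)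
      = M₁ * (zcomb d₁x d₁y) * M₂ + M₃ * (zcomb d₂x d₂y) := by
  simp only [zcomb, smul_sub, smul_add, mul_smul_comm, smul_mul_assoc, mul_sub, sub_mul,
    mul_add, add_mul]
  abel
end alg

section lines
lemma hasDerivAt_lineX (x y t : ℝ) :
    HasDerivAt (fun s => ((s, y, t) : ℝ × ℝ × ℝ)) (1, 0, 0) x :=
  (hasDerivAt_id x).prodMk (hasDerivAt_const x (y, t))

lemma hasDerivAt_lineY (x y t : ℝ) :
    HasDerivAt (fun s => ((x, s, t) : ℝ × ℝ × ℝ)) (0, 1, 0) y :=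
  (hasDerivAt_const y x).prodMk ((hasDerivAt_id y).prodMk (hasDerivAt_const y t))

lemma hasDerivAt_lineT (x y t : ℝ) :
    HasDerivAt (fun s => ((x, y, s) : ℝ × ℝ × ℝ)) (0, 0, 1) t :=
  (hasDerivAt_const t x).prodMk ((hasDerivAt_const t y).prodMk (hasDerivAt_id t))
end lines

section pdsmooth
variable {W : Type*} [NormedAddCommGroup W] [NormedSpace ℝ W]
variable {U : Set (ℝ × ℝ × ℝ)} {p : ℝ × ℝ × ℝ} {F G : ℝ × ℝ × ℝ → W}

lemma pdx_eq_fderiv (hF : DifferentiableAt ℝ F p) :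
    pdx F p = fderiv ℝ F p (1, 0, 0) := by
  obtain ⟨x, y, t⟩ := p
  exact (hF.hasFDerivAt.comp_hasDerivAt x (hasDerivAt_lineX x y t)).deriv

lemma pdy_eq_fderiv (hF : DifferentiableAt ℝ F p) :
    pdy F p = fderiv ℝ F p (0, 1, 0) := by
  obtain ⟨x, y, t⟩ := p
  exact (hF.hasFDerivAt.comp_hasDerivAt y (hasDerivAt_lineY x y t)).deriv

lemma pdt_eq_fderiv (hF : DifferentiableAt ℝ F p) :
    pdt F p = fderiv ℝ F p (0, 0, 1) := by
  obtain ⟨x, y, t⟩ := p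
  exact (hF.hasFDerivAt.comp_hasDerivAt t (hasDerivAt_lineT x y t)).deriv

lemma pdx_contDiffOn (hF : ContDiffOn ℝ (⊤ : ℕ∞) F U) (hU : IsOpen U) :
    ContDiffOn ℝ (⊤ : ℕ∞) (pdx F) U := by
  refine ((hF.fderiv_of_isOpen hU (by simp)).clm_apply
    (contDiffOn_const (c := ((1:ℝ), (0:ℝ), (0:ℝ))))).congr fun q hq => ?_
  exact pdx_eq_fderiv ((hF.contDiffAt (hU.mem_nhds hq)).differentiableAt (by simp))

lemma pdy_contDiffOn (hF : ContDiffOn ℝ (⊤ : ℕ∞) F U) (hU : IsOpen U) :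
    ContDiffOn ℝ (⊤ : ℕ∞) (pdy F) U := by
  refine ((hF.fderiv_of_isOpen hU (by simp)).clm_apply
    (contDiffOn_const (c := ((0:ℝ), (1:ℝ), (0:ℝ))))).congr fun q hq => ?_
  exact pdy_eq_fderiv ((hF.contDiffAt (hU.mem_nhds hq)).differentiableAt (by simp))

lemma pdt_contDiffOn (hF : ContDiffOn ℝ (⊤ : ℕ∞) F U) (hU : IsOpen U) :
    ContDiffOn ℝ (⊤ : ℕ∞) (pdt F) U := by
  refine ((hF.fderiv_of_isOpen hU (by simp)).clm_apply
    (contDiffOn_const (c := ((0:ℝ), (0:ℝ), (1:ℝ))))).congr fun q hq => ?_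
  exact pdt_eq_fderiv ((hF.contDiffAt (hU.mem_nhds hq)).differentiableAt (by simp))

lemma pdx_congr (hFG : ∀ q ∈ U, F q = G q) (hU : IsOpen U) (hp : p ∈ U) :
    pdx F p = pdx G p := by
  obtain ⟨x, y, t⟩ := p
  exact curve_congr hFG hU (hasDerivAt_lineX x y t).differentiableAt.continuousAt rfl hp

lemma pdy_congr (hFG : ∀ q ∈ U, F q = G q) (hU : IsOpen U) (hp : p ∈ U) :
    pdy F p = pdy G p := by
  obtain ⟨x, y, t⟩ := p
  exact curve_congr hFG hU (hasDerivAt_lineY x y t).differentiableAt.continuousAt rfl hp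

lemma pdt_congr (hFG : ∀ q ∈ U, F q = G q) (hU : IsOpen U) (hp : p ∈ U) :
    pdt F p = pdt G p := by
  obtain ⟨x, y, t⟩ := p
  exact curve_congr hFG hU (hasDerivAt_lineT x y t).differentiableAt.continuousAt rfl hp

lemma pdx_sub (hF : ContDiffOn ℝ (⊤ : ℕ∞) F U) (hG : ContDiffOn ℝ (⊤ : ℕ∞) G U) (hU : IsOpen U)
    (hp : p ∈ U) : pdx (fun q => F q - G q) p = pdx F p - pdx G p := by
  obtain ⟨x, y, t⟩ := p
  have hc := (hasDerivAt_lineX x y t).differentiableAt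
  exact curve_sub (curveDiff hF hU hc rfl hp) (curveDiff hG hU hc rfl hp)

lemma pdy_sub (hF : ContDiffOn ℝ (⊤ : ℕ∞) F U) (hG : ContDiffOn ℝ (⊤ : ℕ∞) G U) (hU : IsOpen U)
    (hp : p ∈ U) : pdy (fun q => F q - G q) p = pdy F p - pdy G p := by
  obtain ⟨x, y, t⟩ := p
  have hc := (hasDerivAt_lineY x y t).differentiableAt
  exact curve_sub (curveDiff hF hU hc rfl hp) (curveDiff hG hU hc rfl hp)

lemma pdt_sub (hF : ContDiffOn ℝ (⊤ : ℕ∞) F U) (hG : ContDiffOn ℝ (⊤ : ℕ∞) G U) (hU : IsOpen U)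
    (hp : p ∈ U) : pdt (fun q => F q - G q) p = pdt F p - pdt G p := by
  obtain ⟨x, y, t⟩ := p
  have hc := (hasDerivAt_lineT x y t).differentiableAt
  exact curve_sub (curveDiff hF hU hc rfl hp) (curveDiff hG hU hc rfl hp)

end pdsmooth

section pdc
variable {W : Type*} [NormedAddCommGroup W] [NormedSpace ℂ W]
variable {U : Set (ℝ × ℝ × ℝ)} {p : ℝ × ℝ × ℝ} {F G : ℝ × ℝ × ℝ → W}

lemma pdzbar_congr (hFG : ∀ q ∈ U, F q = G q) (hU : IsOpen U) (hp : p ∈ U) :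
    pdzbar F p = pdzbar G p := by
  unfold pdzbar
  rw [pdx_congr hFG hU hp, pdy_congr hFG hU hp]

lemma pdzbar_sub (hF : ContDiffOn ℝ (⊤ : ℕ∞) F U) (hG : ContDiffOn ℝ (⊤ : ℕ∞) G U) (hU : IsOpen U)
    (hp : p ∈ U) : pdzbar (fun q => F q - G q) p = pdzbar F p - pdzbar G p := by
  unfold pdzbar
  rw [pdx_sub hF hG hU hp, pdy_sub hF hG hU hp]
  module

lemma pdz_contDiffOn (hF : ContDiffOn ℝ (⊤ : ℕ∞) F U) (hU : IsOpen U) :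
    ContDiffOn ℝ (⊤ : ℕ∞) (pdz F) U := by
  unfold pdz
  exact (((pdx_contDiffOn hF hU).sub
    ((pdy_contDiffOn hF hU).const_smul Complex.I)).const_smul ((1 : ℂ) / 2))

end pdc


section hform
variable {U : Set (ℝ × ℝ × ℝ)} {H₁ H₂ : ℝ × ℝ × ℝ → Matrix (Fin n) (Fin n) ℂ}
  {p : ℝ × ℝ × ℝ} {c : ℝ → ℝ × ℝ × ℝ} {x₀ : ℝ}

lemma zcomb_formula' (P Q d₁x d₁y d₂x d₂y : Matrix (Fin n) (Fin n) ℂ) :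
    zcomb (-(P * d₁x * P) * Q + P * d₂x) (-(P * d₁y * P) * Q + P * d₂y)
      = -(P * zcomb d₁x d₁y * P) * Q + P * zcomb d₂x d₂y := by
  simp only [zcomb, smul_sub, smul_add, mul_smul_comm, smul_mul_assoc, mul_sub, sub_mul,
    mul_add, add_mul, neg_mul, mul_neg, smul_neg]
  abel

lemma curve_h_formula (hH₁ : ContDiffOn ℝ (⊤ : ℕ∞) H₁ U) (hH₂ : ContDiffOn ℝ (⊤ : ℕ∞) H₂ U)
    (hU : IsOpen U) (h₁det : ∀ q ∈ U, (H₁ q).det ≠ 0)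
    (hc : DifferentiableAt ℝ c x₀) (hcx : c x₀ = p) (hp : p ∈ U) :
    deriv (fun s => (H₁ (c s))⁻¹ * H₂ (c s)) x₀
      = -((H₁ p)⁻¹ * deriv (fun s => H₁ (c s)) x₀ * (H₁ p)⁻¹) * H₂ p
        + (H₁ p)⁻¹ * deriv (fun s => H₂ (c s)) x₀ := by
  have h1 := curve_inv hH₁ hU h₁det hc hcx hp
  have h2 : deriv (fun s => (H₁ (c s))⁻¹ * H₂ (c s)) x₀
      = deriv (fun s => (H₁ (c s))⁻¹) x₀ * H₂ (c x₀)
        + (H₁ (c x₀))⁻¹ * deriv (fun s => H₂ (c s)) x₀ :=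
    curve_mul (F := fun r => (H₁ r)⁻¹) (G := H₂)
      (curveDiff (contDiffOn_matInv hH₁ h₁det) hU hc hcx hp) (curveDiff hH₂ hU hc hcx hp)
  rw [h2, hcx, h1]

lemma pdx_h (hH₁ : ContDiffOn ℝ (⊤ : ℕ∞) H₁ U) (hH₂ : ContDiffOn ℝ (⊤ : ℕ∞) H₂ U)
    (hU : IsOpen U) (h₁det : ∀ q ∈ U, (H₁ q).det ≠ 0) (hp : p ∈ U) :
    pdx (fun r => (H₁ r)⁻¹ * H₂ r) p
      = -((H₁ p)⁻¹ * pdx H₁ p * (H₁ p)⁻¹) * H₂ p + (H₁ p)⁻¹ * pdx H₂ p := by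
  obtain ⟨x, y, t⟩ := p
  exact curve_h_formula hH₁ hH₂ hU h₁det (hasDerivAt_lineX x y t).differentiableAt rfl hp

lemma pdy_h (hH₁ : ContDiffOn ℝ (⊤ : ℕ∞) H₁ U) (hH₂ : ContDiffOn ℝ (⊤ : ℕ∞) H₂ U)
    (hU : IsOpen U) (h₁det : ∀ q ∈ U, (H₁ q).det ≠ 0) (hp : p ∈ U) :
    pdy (fun r => (H₁ r)⁻¹ * H₂ r) p
      = -((H₁ p)⁻¹ * pdy H₁ p * (H₁ p)⁻¹) * H₂ p + (H₁ p)⁻¹ * pdy H₂ p := by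
  obtain ⟨x, y, t⟩ := p
  exact curve_h_formula hH₁ hH₂ hU h₁det (hasDerivAt_lineY x y t).differentiableAt rfl hp

lemma pdt_h (hH₁ : ContDiffOn ℝ (⊤ : ℕ∞) H₁ U) (hH₂ : ContDiffOn ℝ (⊤ : ℕ∞) H₂ U)
    (hU : IsOpen U) (h₁det : ∀ q ∈ U, (H₁ q).det ≠ 0) (hp : p ∈ U) :
    pdt (fun r => (H₁ r)⁻¹ * H₂ r) p
      = -((H₁ p)⁻¹ * pdt H₁ p * (H₁ p)⁻¹) * H₂ p + (H₁ p)⁻¹ * pdt H₂ p := by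
  obtain ⟨x, y, t⟩ := p
  exact curve_h_formula hH₁ hH₂ hU h₁det (hasDerivAt_lineT x y t).differentiableAt rfl hp

lemma key_z (hH₁ : ContDiffOn ℝ (⊤ : ℕ∞) H₁ U) (hH₂ : ContDiffOn ℝ (⊤ : ℕ∞) H₂ U)
    (hU : IsOpen U) (h₁det : ∀ q ∈ U, (H₁ q).det ≠ 0) (h₂det : ∀ q ∈ U, (H₂ q).det ≠ 0)
    (hp : p ∈ U) :
    ((H₁ p)⁻¹ * H₂ p)⁻¹ * (pdz (fun r => (H₁ r)⁻¹ * H₂ r) p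
        + (((H₁ p)⁻¹ * pdz H₁ p) * ((H₁ p)⁻¹ * H₂ p)
          - ((H₁ p)⁻¹ * H₂ p) * ((H₁ p)⁻¹ * pdz H₁ p)))
      = (H₂ p)⁻¹ * pdz H₂ p - (H₁ p)⁻¹ * pdz H₁ p := by
  have hx := pdx_h hH₁ hH₂ hU h₁det hp
  have hy := pdy_h hH₁ hH₂ hU h₁det hp
  have hzh : pdz (fun r => (H₁ r)⁻¹ * H₂ r) p
      = -((H₁ p)⁻¹ * pdz H₁ p * (H₁ p)⁻¹) * H₂ p + (H₁ p)⁻¹ * pdz H₂ p := by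
    have h0 : pdz (fun r => (H₁ r)⁻¹ * H₂ r) p
        = zcomb (pdx (fun r => (H₁ r)⁻¹ * H₂ r) p) (pdy (fun r => (H₁ r)⁻¹ * H₂ r) p) := rfl
    rw [h0, hx, hy]
    exact zcomb_formula' _ _ _ _ _ _
  rw [hzh]
  exact keyAlg (H₁ p) (H₂ p) (pdz H₁ p) (pdz H₂ p)
    (isUnit_iff_ne_zero.mpr (h₁det p hp)) (isUnit_iff_ne_zero.mpr (h₂det p hp))

lemma key_t (hH₁ : ContDiffOn ℝ (⊤ : ℕ∞) H₁ U) (hH₂ : ContDiffOn ℝ (⊤ : ℕ∞) H₂ U)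
    (hU : IsOpen U) (h₁det : ∀ q ∈ U, (H₁ q).det ≠ 0) (h₂det : ∀ q ∈ U, (H₂ q).det ≠ 0)
    (hp : p ∈ U) :
    ((H₁ p)⁻¹ * H₂ p)⁻¹ * (pdt (fun r => (H₁ r)⁻¹ * H₂ r) p
        + (((H₁ p)⁻¹ * pdt H₁ p) * ((H₁ p)⁻¹ * H₂ p)
          - ((H₁ p)⁻¹ * H₂ p) * ((H₁ p)⁻¹ * pdt H₁ p)))
      = (H₂ p)⁻¹ * pdt H₂ p - (H₁ p)⁻¹ * pdt H₁ p := by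
  rw [pdt_h hH₁ hH₂ hU h₁det hp]
  exact keyAlg (H₁ p) (H₂ p) (pdt H₁ p) (pdt H₂ p)
    (isUnit_iff_ne_zero.mpr (h₁det p hp)) (isUnit_iff_ne_zero.mpr (h₂det p hp))

end hform

/-- If two Hermitian-positive-definite-valued solutions `H₁, H₂` of the Bogomolny equation
`∂_z̄(H⁻¹ ∂_z H) + ρ ∂_t(H⁻¹ ∂_t H) = 0` are given, then `h = H₁⁻¹ H₂` satisfies
`∂_z̄(h⁻¹ ∂_z^{A₁} h) + ρ ∂_t(h⁻¹ (∂_t^{A₁} + iΦ₁) h) = 0`. -/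
theorem stmt8 (n : ℕ) (U : Set (ℝ × ℝ × ℝ)) (hU : IsOpen U)
    (ρ : ℝ × ℝ × ℝ → ℝ)
    (H₁ H₂ : ℝ × ℝ × ℝ → Matrix (Fin n) (Fin n) ℂ)
    (hρ : ContDiffOn ℝ (⊤ : ℕ∞) ρ U)
    (hH₁ : ContDiffOn ℝ (⊤ : ℕ∞) H₁ U) (hH₂ : ContDiffOn ℝ (⊤ : ℕ∞) H₂ U)
    (hH₁pos : ∀ p ∈ U, (H₁ p).PosDef) (hH₂pos : ∀ p ∈ U, (H₂ p).PosDef)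
    (heq₁ : ∀ p ∈ U,
      pdzbar (fun q => (H₁ q)⁻¹ * pdz H₁ q) p
        + (ρ p : ℂ) • pdt (fun q => (H₁ q)⁻¹ * pdt H₁ q) p = 0)
    (heq₂ : ∀ p ∈ U,
      pdzbar (fun q => (H₂ q)⁻¹ * pdz H₂ q) p
        + (ρ p : ℂ) • pdt (fun q => (H₂ q)⁻¹ * pdt H₂ q) p = 0)
    (h : ℝ × ℝ × ℝ → Matrix (Fin n) (Fin n) ℂ)
    (hdef : h = fun p => (H₁ p)⁻¹ * H₂ p) :
    ∀ p ∈ U,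
      pdzbar (fun q => (h q)⁻¹ *
          (pdz h q + (((H₁ q)⁻¹ * pdz H₁ q) * h q - h q * ((H₁ q)⁻¹ * pdz H₁ q)))) p
        + (ρ p : ℂ) • pdt (fun q => (h q)⁻¹ *
          (pdt h q + (((H₁ q)⁻¹ * pdt H₁ q) * h q - h q * ((H₁ q)⁻¹ * pdt H₁ q)))) p
        = 0 := by
  subst hdef
  intro p hp
  have h₁det : ∀ q ∈ U, (H₁ q).det ≠ 0 := fun q hq => (hH₁pos q hq).det_pos.ne'
  have h₂det : ∀ q ∈ U, (H₂ q).det ≠ 0 := fun q hq => (hH₂pos q hq).det_pos.ne'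
  have hA₁z : ContDiffOn ℝ (⊤ : ℕ∞) (fun q => (H₁ q)⁻¹ * pdz H₁ q) U :=
    (contDiffOn_matInv hH₁ h₁det).matMul (pdz_contDiffOn hH₁ hU)
  have hA₂z : ContDiffOn ℝ (⊤ : ℕ∞) (fun q => (H₂ q)⁻¹ * pdz H₂ q) U :=
    (contDiffOn_matInv hH₂ h₂det).matMul (pdz_contDiffOn hH₂ hU)
  have hA₁t : ContDiffOn ℝ (⊤ : ℕ∞) (fun q => (H₁ q)⁻¹ * pdt H₁ q) U :=
    (contDiffOn_matInv hH₁ h₁det).matMul (pdt_contDiffOn hH₁ hU)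
  have hA₂t : ContDiffOn ℝ (⊤ : ℕ∞) (fun q => (H₂ q)⁻¹ * pdt H₂ q) U :=
    (contDiffOn_matInv hH₂ h₂det).matMul (pdt_contDiffOn hH₂ hU)
  have hcz : pdzbar (fun q => ((fun p => (H₁ p)⁻¹ * H₂ p) q)⁻¹ *
      (pdz (fun p => (H₁ p)⁻¹ * H₂ p) q
        + (((H₁ q)⁻¹ * pdz H₁ q) * ((fun p => (H₁ p)⁻¹ * H₂ p) q)
          - ((fun p => (H₁ p)⁻¹ * H₂ p) q) * ((H₁ q)⁻¹ * pdz H₁ q)))) p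
      = pdzbar (fun q => (H₂ q)⁻¹ * pdz H₂ q - (H₁ q)⁻¹ * pdz H₁ q) p :=
    pdzbar_congr (fun q hq => key_z hH₁ hH₂ hU h₁det h₂det hq) hU hp
  have hct : pdt (fun q => ((fun p => (H₁ p)⁻¹ * H₂ p) q)⁻¹ *
      (pdt (fun p => (H₁ p)⁻¹ * H₂ p) q
        + (((H₁ q)⁻¹ * pdt H₁ q) * ((fun p => (H₁ p)⁻¹ * H₂ p) q)
          - ((fun p => (H₁ p)⁻¹ * H₂ p) q) * ((H₁ q)⁻¹ * pdt H₁ q)))) p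
      = pdt (fun q => (H₂ q)⁻¹ * pdt H₂ q - (H₁ q)⁻¹ * pdt H₁ q) p :=
    pdt_congr (fun q hq => key_t hH₁ hH₂ hU h₁det h₂det hq) hU hp
  rw [hcz, hct, pdzbar_sub hA₂z hA₁z hU hp, pdt_sub hA₂t hA₁t hU hp, smul_sub,
    sub_add_sub_comm, heq₂ p hp, heq₁ p hp, sub_zero]
end

section
/- Let f be a holomorphic injective function on the open unit disk 𝔻 ⊂ ℂ with f(0) = 0, and let m₁, …, m_n be integers. Then there exists a holomorphic map p : 𝔻 → M_n(ℂ) with p(w) invertible for every w ∈ 𝔻, such that for all w ∈ 𝔻 with w ≠ 0, diag(f(w)^{m₁}, …, f(w)^{m_n}) = diag(w^{m₁}, …, w^{m_n}) · p(w), where for negative exponents m, x^m means (x⁻¹)^{−m} (well-defined since f(w) ≠ 0 for w ≠ 0 by injectivity). -/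
/-!
Write `f w = w * g w` with `g = dslope f 0` holomorphic on the disk; `p w = diag(g(w)^{mᵢ})`
works as soon as `g` has no zeros. Off `0` this is injectivity of `f`; at `0` it says
`f'(0) ≠ 0`. Were `f - f z` to vanish to order `k ≥ 2` at `z`, we could write `f - f z = φ ^ k`
near `z` with `φ` a local biholomorphism onto a neighbourhood of `0`; the points `ε` and `ε ζ`
of that neighbourhood (`ζ` a primitive `k`-th root of unity) would then have preimages with the
same value of `f`.
-/

open Matrix Filter Topology Set

lemma analyticOrderAt_sub_ne_top_of_injOn {𝕜 E : Type*} [NontriviallyNormedField 𝕜]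
    [NormedAddCommGroup E] [NormedSpace 𝕜 E] {f : 𝕜 → E} {s : Set 𝕜} {z : 𝕜}
    (hinj : InjOn f s) (hs : s ∈ 𝓝 z) :
    analyticOrderAt (f · - f z) z ≠ ⊤ := by
  rw [Ne, analyticOrderAt_eq_top]
  intro hconst
  obtain ⟨w, ⟨hfw, hw⟩, hwz⟩ :=
    (((hconst.and hs).filter_mono nhdsWithin_le_nhds).and
      (self_mem_nhdsWithin : {z}ᶜ ∈ 𝓝[≠] z)).exists
  exact hwz (hinj hw (mem_of_mem_nhds hs) (sub_eq_zero.mp hfw))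

section InjectiveHolomorphic

variable {f : ℂ → ℂ} {s : Set ℂ} {z : ℂ}

lemma Complex.not_injOn_pow_of_mem_nhds_zero {k : ℕ} (hk : 2 ≤ k) (hs : s ∈ 𝓝 (0 : ℂ)) :
    ¬ InjOn (· ^ k) s := by
  obtain ⟨ε, hε, hball⟩ := Metric.mem_nhds_iff.mp hs
  have hk0 : k ≠ 0 := by omega
  have hζ := Complex.isPrimitiveRoot_exp k hk0
  set ζ := Complex.exp (2 * Real.pi * Complex.I / k)
  have ha : ((ε / 2 : ℝ) : ℂ) ∈ Metric.ball (0 : ℂ) ε := by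
    rw [mem_ball_zero_iff, Complex.norm_real, Real.norm_of_nonneg (by positivity)]
    linarith
  have hb : ((ε / 2 : ℝ) : ℂ) * ζ ∈ Metric.ball (0 : ℂ) ε := by
    rwa [mem_ball_zero_iff, norm_mul, hζ.norm'_eq_one hk0, mul_one, ← mem_ball_zero_iff]
  intro hinj
  have hab := hinj (hball ha) (hball hb) (by simp only [mul_pow, hζ.pow_eq_one, mul_one])
  refine hζ.ne_one (by omega) ?_
  have hε2 : ((ε / 2 : ℝ) : ℂ) ≠ 0 := by exact_mod_cast (half_pos hε).ne'
  exact (mul_eq_left₀ hε2).mp hab.symm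

lemma Complex.exists_analyticAt_pow_eq {h : ℂ → ℂ} (hh : AnalyticAt ℂ h z) (hz : h z ≠ 0)
    {k : ℕ} (hk : k ≠ 0) : ∃ r : ℂ → ℂ, AnalyticAt ℂ r z ∧ r z ≠ 0 ∧ ∀ w, r w ^ k = h w := by
  -- the principal branch is applied to `h / h z`, which is `1` at `z`
  set c := h z ^ (k⁻¹ : ℂ)
  have hc : c ^ k = h z := Complex.cpow_nat_inv_pow _ hk
  refine ⟨fun w => c * (h w / h z) ^ (k⁻¹ : ℂ), ?_, ?_, fun w => ?_⟩
  · refine analyticAt_const.mul ((hh.div_const).cpow analyticAt_const ?_)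
    simp [hz, Complex.one_mem_slitPlane]
  · have hc0 : c ≠ 0 := fun h0 => hz (by rw [← hc, h0, zero_pow hk])
    simpa [hz] using hc0
  · rw [mul_pow, hc, Complex.cpow_nat_inv_pow _ hk, mul_div_cancel₀ _ hz]

lemma not_injOn_of_eventuallyEq_pow {F φ : ℂ → ℂ} {φ' : ℂ} (hφ : HasStrictDerivAt φ φ' z)
    (hφ' : φ' ≠ 0) (hφz : φ z = 0) {k : ℕ} (hk : 2 ≤ k) (hF : F =ᶠ[𝓝 z] fun w => φ w ^ k)
    (hs : s ∈ 𝓝 z) : ¬ InjOn F s := by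
  intro hinj
  have himage : φ '' (s ∩ {w | F w = φ w ^ k}) ∈ 𝓝 (0 : ℂ) := by
    rw [← hφz, ← hφ.map_nhds_eq hφ']
    exact image_mem_map (inter_mem hs hF)
  refine Complex.not_injOn_pow_of_mem_nhds_zero hk himage ?_
  rintro _ ⟨a, ha, rfl⟩ _ ⟨b, hb, rfl⟩ hab
  exact congrArg φ (hinj ha.1 hb.1 (by rw [ha.2, hb.2]; exact hab))

lemma AnalyticAt.deriv_ne_zero_of_injOn (hf : AnalyticAt ℂ f z) (hinj : InjOn f s)
    (hs : s ∈ 𝓝 z) : deriv f z ≠ 0 := by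
  intro hd
  lift analyticOrderAt (f · - f z) z to ℕ using analyticOrderAt_sub_ne_top_of_injOn hinj hs
    with k hk
  have hk2 : 2 ≤ k := by
    have hpos : analyticOrderAt (deriv f) z ≠ 0 := by
      rw [Ne, hf.deriv.analyticOrderAt_eq_zero, not_not, hd]
    have hsucc := hf.analyticOrderAt_deriv_add_one
    rw [← hk] at hsucc
    have : (1 : ℕ∞) + 1 ≤ k := hsucc ▸ add_le_add_left (Order.one_le_iff_ne_zero.mpr hpos) 1
    exact_mod_cast this
  obtain ⟨h, hh, hhz, hE⟩ := ((hf.sub analyticAt_const).analyticOrderAt_eq_natCast).mp hk.symm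
  obtain ⟨r, hr, hrz, hrk⟩ := Complex.exists_analyticAt_pow_eq hh hhz (by omega : k ≠ 0)
  have hφ : HasStrictDerivAt (fun w => (w - z) * r w) (r z) z := by
    simpa using
      ((hasStrictDerivAt_id z).fun_sub (hasStrictDerivAt_const z z)).fun_mul hr.hasStrictDerivAt
  refine not_injOn_of_eventuallyEq_pow (F := (f · - f z)) hφ hrz (by simp) hk2 ?_ hs ?_
  · filter_upwards [hE] with w hw
    rw [mul_pow, hrk, ← smul_eq_mul]
    exact hw
  · intro a ha b hb hab
    exact hinj ha hb (sub_left_inj.mp hab)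

lemma dslope_ne_zero_of_injOn {U : Set ℂ} (hU : IsOpen U) (hf : DifferentiableOn ℂ f U)
    (hinj : InjOn f U) (hz : z ∈ U) {w : ℂ} (hw : w ∈ U) : dslope f z w ≠ 0 := by
  rcases eq_or_ne w z with rfl | hwz
  · rw [dslope_same]
    exact (hf.analyticAt (hU.mem_nhds hz)).deriv_ne_zero_of_injOn hinj (hU.mem_nhds hz)
  · rw [dslope_of_ne _ hwz, slope_def_field]
    exact div_ne_zero (sub_ne_zero.mpr fun h => hwz (hinj hw hz h)) (sub_ne_zero.mpr hwz)

end InjectiveHolomorphic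

lemma Matrix.isUnit_diagonal_zpow {ι K : Type*} [Fintype ι] [DecidableEq ι] [Field K] {a : K}
    (ha : a ≠ 0) (m : ι → ℤ) : IsUnit (diagonal fun i => a ^ m i) :=
  isUnit_diagonal.mpr (Pi.isUnit_iff.mpr fun i => (zpow_ne_zero (m i) ha).isUnit)

lemma Matrix.differentiableOn_diagonal_apply {𝕜 E ι : Type*} [NontriviallyNormedField 𝕜]
    [NormedAddCommGroup E] [NormedSpace 𝕜 E] [DecidableEq ι] {d : 𝕜 → ι → E} {s : Set 𝕜}
    (hd : ∀ i, DifferentiableOn 𝕜 (fun w => d w i) s) (i j : ι) :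
    DifferentiableOn 𝕜 (fun w => diagonal (d w) i j) s := by
  simp only [diagonal_apply]
  split_ifs
  exacts [hd i, differentiableOn_const 0]

/-- Coordinate-independence of loop-group strata: for a holomorphic injective `f` on the
unit disk with `f 0 = 0` and integers `m₁, …, m_n`, there is a holomorphic family
`p : 𝔻 → Mₙ(ℂ)` of invertible matrices with
`diag(f(w)^{mᵢ}) = diag(w^{mᵢ}) · p(w)` for `w ≠ 0` in the disk. -/
theorem stmt14 (n : ℕ) (f : ℂ → ℂ)
    (hf : DifferentiableOn ℂ f (Metric.ball 0 1))
    (hinj : Set.InjOn f (Metric.ball 0 1))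
    (hf0 : f 0 = 0) (m : Fin n → ℤ) :
    ∃ p : ℂ → Matrix (Fin n) (Fin n) ℂ,
      (∀ i j : Fin n, DifferentiableOn ℂ (fun w => p w i j) (Metric.ball 0 1)) ∧
      (∀ w ∈ Metric.ball (0 : ℂ) 1, IsUnit (p w)) ∧
      (∀ w ∈ Metric.ball (0 : ℂ) 1, w ≠ 0 →
        Matrix.diagonal (fun i => f w ^ m i)
          = Matrix.diagonal (fun i => w ^ m i) * p w) := by
  have h0 : (0 : ℂ) ∈ Metric.ball (0 : ℂ) 1 := Metric.mem_ball_self one_pos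
  set g := dslope f 0
  have hg : DifferentiableOn ℂ g (Metric.ball 0 1) :=
    (Complex.differentiableOn_dslope (Metric.isOpen_ball.mem_nhds h0)).mpr hf
  have hg0 : ∀ w ∈ Metric.ball (0 : ℂ) 1, g w ≠ 0 := fun w hw =>
    dslope_ne_zero_of_injOn Metric.isOpen_ball hf hinj h0 hw
  have hfg : ∀ w, f w = w * g w := fun w => by
    simpa [hf0] using (sub_smul_dslope f 0 w).symm
  refine ⟨fun w => diagonal fun i => g w ^ m i,
    differentiableOn_diagonal_apply fun i => hg.zpow (Or.inl hg0),
    fun w hw => isUnit_diagonal_zpow (hg0 w hw) m, fun w _ _ => ?_⟩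
  rw [diagonal_mul_diagonal]
  simp_rw [hfg w, mul_zpow]
end
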